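/- arXiv:1612.07619 — 7 statements merged into one kernel-verified Lean document; each statement's English description precedes it below -/
import Mathlib

section
/- For any positive integer n, the (n+1)×(n+1) Clement matrix C_n with c_{k,k+1} = k and c_{k+1,k} = n+1-k for k = 1,...,n (and zero elsewhere) has characteristic polynomial ∏_{j=0}^{n} (λ - (2j - n)); equivalently, its eigenvalues are exactly -n, -n+2, ..., n-2, n. -/
open Polynomial

/-- The `(n+1) × (n+1)` Clement (Sylvester–Kac) matrix: tridiagonal with zero
diagonal, superdiagonal entries `1, 2, ..., n` (i.e. `c_{k,k+1} = k`) and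
subdiagonal entries `n, n-1, ..., 1` (i.e. `c_{k+1,k} = n+1-k`). -/
def clement (n : ℕ) : Matrix (Fin (n + 1)) (Fin (n + 1)) ℝ :=
  Matrix.of fun i j =>
    if (i : ℕ) + 1 = (j : ℕ) then ((i : ℕ) + 1 : ℝ)
    else if (j : ℕ) + 1 = (i : ℕ) then ((n : ℝ) - (j : ℕ))
    else 0

open Matrix

noncomputable def PP (a r : ℕ) : ℝ[X] := (1 + X)^a * (1 - X)^r

lemma key (a r : ℕ) :
    (1 - X^2) * derivative (PP a r) + ((a:ℝ[X]) + (r:ℝ[X])) * (X * PP a r)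
      = ((a:ℝ[X]) - (r:ℝ[X])) * PP a r := by
  have ha : ((a:ℝ[X])) * (1 + X)^(a-1) * (1 + X) = (a:ℝ[X]) * (1 + X)^a := by
    cases a with
    | zero => simp
    | succ k => rw [Nat.add_sub_cancel, mul_assoc, ← pow_succ]
  have hb : ((r:ℝ[X])) * (1 - X)^(r-1) * (1 - X) = (r:ℝ[X]) * (1 - X)^r := by
    cases r with
    | zero => simp
    | succ k => rw [Nat.add_sub_cancel, mul_assoc, ← pow_succ]
  unfold PP
  rw [derivative_mul, derivative_pow, derivative_pow]
  simp only [derivative_add, derivative_one, derivative_X, derivative_sub, zero_add, zero_sub,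
    mul_one, mul_neg, Polynomial.C_eq_natCast]
  linear_combination (1 - X)^(r+1) * ha - (1 + X)^(a+1) * hb

lemma hC (a r : ℕ) : ((a:ℝ[X]) + (r:ℝ[X])) = C ((a:ℝ) + r) ∧ ((a:ℝ[X]) - (r:ℝ[X])) = C ((a:ℝ) - r) := by
  constructor <;> push_cast <;> simp

lemma key0 (a r : ℕ) : (PP a r).coeff 1 = ((a:ℝ) - (r:ℝ)) * (PP a r).coeff 0 := by
  have h := congrArg (fun q => q.coeff 0) (key a r)
  simp only [(hC a r).1, (hC a r).2, sub_mul, one_mul, coeff_add, coeff_sub, coeff_C_mul,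
    mul_coeff_zero, coeff_X_zero, coeff_derivative, zero_mul, mul_zero] at h
  simpa using h

lemma keyS (a r k : ℕ) :
    ((k:ℝ) + 2) * (PP a r).coeff (k+2) + (((a:ℝ) + r) - k) * (PP a r).coeff k
      = ((a:ℝ) - (r:ℝ)) * (PP a r).coeff (k+1) := by
  have h := congrArg (fun q => q.coeff (k+1)) (key a r)
  simp only [(hC a r).1, (hC a r).2, sub_mul, one_mul, coeff_add, coeff_sub, coeff_C_mul,
    coeff_X_mul, coeff_derivative] at h
  have hx : (X^2 * derivative (PP a r)).coeff (k+1) = (k:ℝ) * (PP a r).coeff k := by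
    cases k with
    | zero =>
      rw [show X^2 * derivative (PP a r) = derivative (PP a r) * X^2 from mul_comm _ _,
        coeff_mul_X_pow']
      simp
    | succ m =>
      rw [show m+1+1 = m + 2 from rfl, coeff_X_pow_mul]
      simp [coeff_derivative]; ring
  rw [hx] at h
  push_cast at h ⊢
  linarith [h]

lemma deg_PP (a r : ℕ) : (PP a r).natDegree ≤ a + r := by
  have h1 : ((1:ℝ[X]) + X).natDegree ≤ 1 := by simpa using natDegree_add_le (1:ℝ[X]) X
  have h2 : ((1:ℝ[X]) - X).natDegree ≤ 1 := by simpa using natDegree_sub_le (1:ℝ[X]) X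
  refine natDegree_mul_le.trans (add_le_add ?_ ?_)
  · exact natDegree_pow_le.trans (by simpa using Nat.mul_le_mul_left a h1)
  · exact natDegree_pow_le.trans (by simpa using Nat.mul_le_mul_left r h2)

lemma coeff_PP_zero (a r : ℕ) : (PP a r).coeff 0 = 1 := by
  rw [coeff_zero_eq_eval_zero]
  simp [PP]

lemma eigen (n r : ℕ) (hr : r ≤ n) :
    (clement n) *ᵥ (fun j : Fin (n+1) => (PP (n-r) r).coeff j)
      = ((n:ℝ) - 2*r) • (fun j : Fin (n+1) => (PP (n-r) r).coeff j) := by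
  set a := n - r with ha
  have han : a + r = n := by omega
  have hcast : ((a:ℕ):ℝ) = (n:ℝ) - r := by
    rw [ha, Nat.cast_sub hr]
  have hwtop : (PP a r).coeff (n+1) = 0 := by
    apply coeff_eq_zero_of_natDegree_lt
    have := deg_PP a r
    omega
  funext i
  simp only [Matrix.mulVec, dotProduct, clement, Matrix.of_apply, Pi.smul_apply,
    smul_eq_mul]
  rw [Fin.sum_univ_eq_sum_range (fun j => (if (i:ℕ)+1 = j then ((i:ℕ)+1:ℝ)
    else if j+1 = (i:ℕ) then (n:ℝ) - j else 0) * (PP a r).coeff j)]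
  have hsplit : ∀ j ∈ Finset.range (n+1),
      (if (i:ℕ)+1 = j then ((i:ℕ)+1:ℝ) else if j+1 = (i:ℕ) then (n:ℝ) - j else 0)
          * (PP a r).coeff j
      = (if (i:ℕ)+1 = j then ((i:ℕ)+1:ℝ) * (PP a r).coeff j else 0)
        + (if j+1 = (i:ℕ) then ((n:ℝ) - j) * (PP a r).coeff j else 0) := by
    intro j _
    rcases eq_or_ne ((i:ℕ)+1) j with h|h
    · rw [if_pos h, if_pos h, if_neg (by omega), add_zero]
    · rw [if_neg h, if_neg h, zero_add]
      by_cases h2 : j+1 = (i:ℕ)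
      · rw [if_pos h2, if_pos h2]
      · rw [if_neg h2, if_neg h2, zero_mul]
  rw [Finset.sum_congr rfl hsplit, Finset.sum_add_distrib,
    Finset.sum_ite_eq (Finset.range (n+1)) ((i:ℕ)+1)
      (fun j => ((i:ℕ)+1:ℝ) * (PP a r).coeff j)]
  have hfirst : (if (i:ℕ)+1 ∈ Finset.range (n+1)
        then ((i:ℕ)+1:ℝ) * (PP a r).coeff ((i:ℕ)+1) else 0)
      = ((i:ℕ)+1:ℝ) * (PP a r).coeff ((i:ℕ)+1) := by
    by_cases h : (i:ℕ)+1 ∈ Finset.range (n+1)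
    · rw [if_pos h]
    · rw [if_neg h]
      have hiN : (i:ℕ) = n := by
        have := i.isLt; simp only [Finset.mem_range] at h; omega
      rw [hiN, hwtop, mul_zero]
  rw [hfirst]
  rcases Nat.eq_zero_or_pos (i:ℕ) with h0 | hpos
  · have hz : ∀ j ∈ Finset.range (n+1),
        (if j+1 = (i:ℕ) then ((n:ℝ) - j) * (PP a r).coeff j else 0) = 0 := by
      intro j _; rw [if_neg (by omega)]
    rw [Finset.sum_eq_zero hz, h0]
    have k0 := key0 a r
    rw [hcast] at k0
    push_cast
    linear_combination k0
  · obtain ⟨k, hk⟩ : ∃ k, (i:ℕ) = k + 1 := ⟨(i:ℕ)-1, by omega⟩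
    have hconv : ∀ j ∈ Finset.range (n+1),
        (if j+1 = (i:ℕ) then ((n:ℝ) - j) * (PP a r).coeff j else 0)
        = (if j = k then ((n:ℝ) - j) * (PP a r).coeff j else 0) := by
      intro j _
      congr 1
      simp only [eq_iff_iff]
      omega
    rw [Finset.sum_congr rfl hconv,
      Finset.sum_ite_eq' (Finset.range (n+1)) k
        (fun j => ((n:ℝ) - j) * (PP a r).coeff j),
      if_pos (by simp only [Finset.mem_range]; have := i.isLt; omega)]
    have kS := keyS a r k
    rw [hcast] at kS
    rw [hk]
    push_cast
    linear_combination kS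

lemma eval_charpoly' {m : ℕ} (M : Matrix (Fin m) (Fin m) ℝ) (μ : ℝ) :
    M.charpoly.eval μ = (μ • (1 : Matrix (Fin m) (Fin m) ℝ) - M).det := by
  rw [Matrix.charpoly, ← coe_evalRingHom, RingHom.map_det]
  congr 1
  ext i j
  rcases eq_or_ne i j with h | h
  · subst h
    simp [Matrix.charmatrix_apply_eq, Matrix.one_apply_eq]
  · simp [Matrix.charmatrix_apply_ne _ _ _ h, Matrix.one_apply_ne h]

lemma spectrum_iff {m : ℕ} (M : Matrix (Fin (m+1)) (Fin (m+1)) ℝ) (x : ℝ) :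
    x ∈ spectrum ℝ M ↔ M.charpoly.eval x = 0 := by
  rw [spectrum.mem_iff, Algebra.algebraMap_eq_smul_one, eval_charpoly',
    Matrix.isUnit_iff_isUnit_det, isUnit_iff_ne_zero, not_not]

lemma clement_root (n r : ℕ) (hr : r ≤ n) :
    (clement n).charpoly.eval ((n:ℝ) - 2*r) = 0 := by
  rw [eval_charpoly']
  rw [← Matrix.exists_mulVec_eq_zero_iff]
  refine ⟨fun j : Fin (n+1) => (PP (n-r) r).coeff j, ?_, ?_⟩
  · intro h
    have h0 := congrFun h 0
    simp [coeff_PP_zero] at h0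
  · rw [Matrix.sub_mulVec, Matrix.smul_mulVec, Matrix.one_mulVec, eigen n r hr,
      sub_self]


/-- the Clement matrix has characteristic polynomial
`∏_{j=0}^{n} (λ - (2j - n))`; equivalently its eigenvalues are exactly
`-n, -n+2, ..., n-2, n`. -/
theorem clement_charpoly_and_spectrum (n : ℕ) (hn : 0 < n) :
    (clement n).charpoly
        = ∏ j ∈ Finset.range (n + 1), (X - C (2 * (j : ℝ) - (n : ℝ))) ∧
      spectrum ℝ (clement n)
        = {x : ℝ | ∃ j : Fin (n + 1), x = 2 * (j : ℕ) - (n : ℝ)} := by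
  have hq_monic : (∏ j ∈ Finset.range (n + 1), (X - C (2 * (j : ℝ) - (n : ℝ)))).Monic :=
    monic_prod_of_monic _ _ fun j _ => monic_X_sub_C _
  have hp_monic := (clement n).charpoly_monic
  have hdvd : (∏ j ∈ Finset.range (n + 1), (X - C (2 * (j : ℝ) - (n : ℝ))))
      ∣ (clement n).charpoly := by
    refine Finset.prod_dvd_of_coprime ?_ ?_
    · intro i hi j hj hij
      refine Polynomial.isCoprime_X_sub_C_of_isUnit_sub ?_
      rw [isUnit_iff_ne_zero]
      simp only [Finset.mem_coe, Finset.mem_range] at hi hj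
      intro h
      apply hij
      have : (i:ℝ) = (j:ℝ) := by linarith [h]
      exact_mod_cast this
    · intro j hj
      rw [Finset.mem_range] at hj
      rw [dvd_iff_isRoot]
      have hjn : j ≤ n := by omega
      have := clement_root n (n - j) (Nat.sub_le n j)
      have hc : ((n - j : ℕ) : ℝ) = (n:ℝ) - j := Nat.cast_sub hjn
      have h2 : 2 * (j:ℝ) - n = (n:ℝ) - 2 * ((n - j : ℕ) : ℝ) := by
        rw [hc]; ring
      unfold Polynomial.IsRoot
      rw [h2]
      exact this
  have hq_deg : (∏ j ∈ Finset.range (n + 1), (X - C (2 * (j : ℝ) - (n : ℝ)))).natDegree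
      = n + 1 := by
    rw [natDegree_prod_of_monic _ _ fun j _ => monic_X_sub_C _]
    simp only [natDegree_X_sub_C, Finset.sum_const, Finset.card_range, smul_eq_mul, mul_one]
  have hp_deg : (clement n).charpoly.natDegree = n + 1 := by
    rw [Matrix.charpoly_natDegree_eq_dim]
    simp
  have hmain : (clement n).charpoly
      = ∏ j ∈ Finset.range (n + 1), (X - C (2 * (j : ℝ) - (n : ℝ))) :=
    Polynomial.eq_of_monic_of_dvd_of_natDegree_le hq_monic hp_monic hdvd
      (by rw [hq_deg, hp_deg])
  refine ⟨hmain, ?_⟩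
  ext x
  rw [Set.mem_setOf_eq, spectrum_iff, hmain, eval_prod]
  rw [Finset.prod_eq_zero_iff]
  constructor
  · rintro ⟨j, hj, hz⟩
    rw [Finset.mem_range] at hj
    simp only [eval_sub, eval_X, eval_C, sub_eq_zero] at hz
    exact ⟨⟨j, hj⟩, hz⟩
  · rintro ⟨j, hj⟩
    refine ⟨(j:ℕ), Finset.mem_range.mpr j.isLt, ?_⟩
    simp only [eval_sub, eval_X, eval_C, sub_eq_zero]
    exact hj
end

section
/- For n = 2m even, the (n+1)×(n+1) matrix H_n(a,b) with superdiagonal entries h_{k,k+1} = k if k is even and k+a if k is odd, and subdiagonal entries h_{n+2-k,n+1-k} = k if k is even and k+b if k is odd (for k = 1,...,n), has characteristic polynomial λ·∏_{k=1}^{m} (λ² - 2k(2k+a+b)). In particular its eigenvalues are 0 and ±√(2k(2k+a+b)) for k = 1,...,m. -/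
open Polynomial
open Matrix

/-- The `(n+1) × (n+1)` matrix `H_n(a,b)`: tridiagonal with zero diagonal,
superdiagonal entries `h_{k,k+1} = k` (`k` even) or `k + a` (`k` odd), and
subdiagonal entries `h_{n+2-k,n+1-k} = k` (`k` even) or `k + b` (`k` odd),
for `k = 1, ..., n` (1-based indexing). -/
def Hmat (n : ℕ) (a b : ℝ) : Matrix (Fin (n + 1)) (Fin (n + 1)) ℝ :=
  Matrix.of fun i j =>
    if (i : ℕ) + 1 = (j : ℕ) then
      (if ((i : ℕ) + 1) % 2 = 0 then ((i : ℕ) + 1 : ℝ) else ((i : ℕ) + 1 : ℝ) + a)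
    else if (j : ℕ) + 1 = (i : ℕ) then
      (if (n - (j : ℕ)) % 2 = 0 then ((n - (j : ℕ) : ℕ) : ℝ)
       else ((n - (j : ℕ) : ℕ) : ℝ) + b)
    else 0

namespace HmatAux

variable {R : Type*} [CommRing R]

def tri (d u l : ℕ → R) (t N : ℕ) : Matrix (Fin N) (Fin N) R :=
  Matrix.of fun i j =>
    if (i : ℕ) = j then d (t + i)
    else if (i : ℕ) + 1 = j then u (t + i)
    else if (j : ℕ) + 1 = i then l (t + j) else 0

def cont (d u l : ℕ → R) : ℕ → ℕ → R
  | _, 0 => 1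
  | t, 1 => d t
  | t, (N+2) => d t * cont d u l (t+1) (N+1) - u t * l t * cont d u l (t+2) N

lemma cont_zero (d u l : ℕ → R) (t : ℕ) : cont d u l t 0 = 1 := rfl
lemma cont_one (d u l : ℕ → R) (t : ℕ) : cont d u l t 1 = d t := rfl
lemma cont_two_step (d u l : ℕ → R) (t N : ℕ) :
    cont d u l t (N+2) = d t * cont d u l (t+1) (N+1) - u t * l t * cont d u l (t+2) N := rfl

theorem det_tri (d u l : ℕ → R) : ∀ N t, (tri d u l t N).det = cont d u l t N := by
  intro N
  induction N using Nat.strong_induction_on with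
  | _ N ih =>
    match N with
    | 0 => intro t; simp [tri, cont, Matrix.det_fin_zero]
    | 1 =>
      intro t
      rw [Matrix.det_fin_one, cont_one]
      simp [tri]
    | (N+2) =>
      intro t
      rw [Matrix.det_succ_column_zero, Fin.sum_univ_succ, Fin.sum_univ_succ]
      have hz : ∀ i : Fin N, ((-1:R)) ^ (((i.succ.succ) : Fin (N+2)) : ℕ) *
          (tri d u l t (N+2)) i.succ.succ 0 *
          ((tri d u l t (N+2)).submatrix (Fin.succAbove i.succ.succ) Fin.succ).det = 0 := by
        intro i
        have h0 : (tri d u l t (N+2)) i.succ.succ 0 = 0 := by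
          simp only [tri, Matrix.of_apply, Fin.val_succ, Fin.val_zero]
          split_ifs <;> first | rfl | omega | simp_all
        rw [h0]; ring
      rw [Finset.sum_congr rfl (fun i _ => hz i), Finset.sum_const, smul_zero, add_zero]
      have hS0 : (tri d u l t (N+2)).submatrix (Fin.succAbove 0) Fin.succ
          = tri d u l (t+1) (N+1) := by
        ext i j
        simp only [Matrix.submatrix_apply, Fin.succAbove_zero, tri, Matrix.of_apply, Fin.val_succ]
        split_ifs <;> first | (congr 1; omega) | rfl | omega | simp_all
      have hd00 : (tri d u l t (N+2)) 0 0 = d t := by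
        simp [tri]
      have hd10 : (tri d u l t (N+2)) ((0 : Fin (N+1)).succ) 0 = l t := by
        simp only [tri, Matrix.of_apply]
        norm_num
      have hS1 : ((tri d u l t (N+2)).submatrix (Fin.succAbove (0 : Fin (N+1)).succ) Fin.succ).det
          = u t * cont d u l (t+2) N := by
        rw [Matrix.det_succ_row_zero, Fin.sum_univ_succ]
        have hz2 : ∀ j : Fin N, ((-1:R)) ^ ((j.succ : Fin (N+1)) : ℕ) *
            ((tri d u l t (N+2)).submatrix (Fin.succAbove (0 : Fin (N+1)).succ) Fin.succ) 0 j.succ *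
            ((((tri d u l t (N+2)).submatrix (Fin.succAbove (0 : Fin (N+1)).succ) Fin.succ)).submatrix Fin.succ (Fin.succAbove j.succ)).det = 0 := by
          intro j
          have h0 : ((tri d u l t (N+2)).submatrix (Fin.succAbove (0 : Fin (N+1)).succ) Fin.succ) 0 j.succ = 0 := by
            simp only [Matrix.submatrix_apply, Fin.succ_zero_eq_one, Fin.one_succAbove_zero,
              tri, Matrix.of_apply, Fin.val_succ, Fin.val_zero]
            split_ifs <;> first | rfl | omega | simp_all
          rw [h0]; ring
        rw [Finset.sum_congr rfl (fun j _ => hz2 j), Finset.sum_const, smul_zero, add_zero]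
        have he : ((tri d u l t (N+2)).submatrix (Fin.succAbove (0 : Fin (N+1)).succ) Fin.succ) 0 0 = u t := by
          simp only [Matrix.submatrix_apply, Fin.succ_zero_eq_one, Fin.one_succAbove_zero,
            tri, Matrix.of_apply]
          norm_num
        have hsub : (((tri d u l t (N+2)).submatrix (Fin.succAbove (0 : Fin (N+1)).succ) Fin.succ)).submatrix Fin.succ (Fin.succAbove (0 : Fin (N+1))) = tri d u l (t+2) N := by
          ext i j
          simp only [Matrix.submatrix_apply, Fin.succ_zero_eq_one, Fin.succAbove_zero,
            Fin.one_succAbove_succ, tri, Matrix.of_apply, Fin.val_succ]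
          split_ifs <;> first | (congr 1; omega) | rfl | omega | simp_all
        rw [he, hsub, ih N (by omega) (t+2)]
        simp
      rw [hS0, hd00, hd10, hS1, ih (N+1) (by omega) (t+1), cont_two_step]
      simp only [Fin.val_zero, pow_zero, one_mul, Fin.val_succ, pow_succ, pow_zero]
      ring

lemma contBC (x : R) (u l : ℕ → R) (hu : ∀ j, j % 2 = 1 → u j = 0) :
    ∀ N, (∀ t, t % 2 = 0 → cont (fun _ => x) u l t (2*N+1)
            = x * ∏ j ∈ Finset.range N, (x^2 - u (t+2*j) * l (t+2*j)))
       ∧ (∀ t, t % 2 = 1 → cont (fun _ => x) u l t (2*N+2)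
            = x^2 * ∏ j ∈ Finset.range N, (x^2 - u (t+2*j+1) * l (t+2*j+1))) := by
  intro N
  induction N with
  | zero =>
    constructor
    · intro t _; simpa using (cont_one (fun _ => x) u l t)
    · intro t ht
      rw [show 2*0+2 = 0+2 by norm_num, cont_two_step, hu t ht]
      simp [cont_zero, cont_one]
      ring
  | succ N ih =>
    have hB : ∀ t, t % 2 = 0 → cont (fun _ => x) u l t (2*(N+1)+1)
        = x * ∏ j ∈ Finset.range (N+1), (x^2 - u (t+2*j) * l (t+2*j)) := by
      intro t ht
      rw [show 2*(N+1)+1 = (2*N+1)+2 by ring, cont_two_step,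
        ih.2 (t+1) (by omega), ih.1 (t+2) (by omega)]
      have e1 : ∀ j ∈ Finset.range N, x^2 - u (t+1+2*j+1) * l (t+1+2*j+1)
          = x^2 - u (t+2*(j+1)) * l (t+2*(j+1)) := by
        intro j _; rw [show t+1+2*j+1 = t+2*(j+1) by ring]
      have e2 : ∀ j ∈ Finset.range N, x^2 - u (t+2+2*j) * l (t+2+2*j)
          = x^2 - u (t+2*(j+1)) * l (t+2*(j+1)) := by
        intro j _; rw [show t+2+2*j = t+2*(j+1) by ring]
      rw [Finset.prod_congr rfl e1, Finset.prod_congr rfl e2, Finset.prod_range_succ']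
      simp only [mul_zero, add_zero]
      ring
    exact ⟨hB, by
      intro t ht
      rw [show 2*(N+1)+2 = (2*(N+1)+1)+1 by ring]
      rw [show (2*(N+1)+1)+1 = (2*N+2)+2 by ring, cont_two_step, hu t ht,
        show 2*N+2+1 = 2*(N+1)+1 by ring, hB (t+1) (by omega)]
      have e1 : ∀ j ∈ Finset.range (N+1), x^2 - u (t+1+2*j) * l (t+1+2*j)
          = x^2 - u (t+2*j+1) * l (t+2*j+1) := by
        intro j _; rw [show t+1+2*j = t+2*j+1 by ring]
      rw [Finset.prod_congr rfl e1]
      ring⟩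


noncomputable section

def sH (a : ℝ) (iv : ℕ) : ℝ := if (iv+1) % 2 = 0 then (iv : ℝ) + 1 else (iv : ℝ) + 1 + a
def tH (m : ℕ) (b : ℝ) (jv : ℕ) : ℝ :=
  if (2*m - jv) % 2 = 0 then ((2*m - jv : ℕ) : ℝ) else ((2*m - jv : ℕ) : ℝ) + b
def uK (m : ℕ) (a b : ℝ) (j : ℕ) : ℝ := if j % 2 = 0 then ((2*m - j : ℕ) : ℝ) + a + b else 0
def lK (m : ℕ) (b : ℝ) (j : ℕ) : ℝ :=
  if j % 2 = 0 then ((2*m - j : ℕ) : ℝ) else -(((2*m - j : ℕ) : ℝ) + b)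

def Pent (iv jv : ℕ) : ℝ :=
  if iv % 2 = jv % 2 then (-1 : ℝ)^(iv/2) * (Nat.choose (jv/2) (iv/2) : ℝ) else 0

def Pmat (m : ℕ) : Matrix (Fin (2*m+1)) (Fin (2*m+1)) ℝ :=
  Matrix.of fun i j => Pent (i : ℕ) (j : ℕ)

def Kmat (m : ℕ) (a b : ℝ) : Matrix (Fin (2*m+1)) (Fin (2*m+1)) ℝ :=
  Matrix.of fun i j =>
    if (i : ℕ) = (j : ℕ) then 0
    else if (i : ℕ) + 1 = (j : ℕ) then uK m a b i
    else if (j : ℕ) + 1 = (i : ℕ) then lK m b j else 0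

lemma Hmat_apply (m : ℕ) (a b : ℝ) (i j : Fin (2*m+1)) :
    Hmat (2*m) a b i j =
      if (i : ℕ) + 1 = (j : ℕ) then sH a (i : ℕ)
      else if (j : ℕ) + 1 = (i : ℕ) then tH m b (j : ℕ) else 0 := rfl


lemma sum_ite_val {sz : ℕ} (c : ℕ) (G : Fin sz → ℝ) :
    (∑ l : Fin sz, if c = (l : ℕ) then G l else 0) = if h : c < sz then G ⟨c, h⟩ else 0 := by
  by_cases h : c < sz
  · rw [dif_pos h, Finset.sum_eq_single ⟨c, h⟩]
    · rw [if_pos rfl]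
    · intro l _ hl
      rw [if_neg]
      intro e
      exact hl (Fin.ext e.symm)
    · intro hc; exact absurd (Finset.mem_univ _) hc
  · rw [dif_neg h]
    apply Finset.sum_eq_zero
    intro l _
    rw [if_neg]
    have := l.isLt
    omega

lemma Hmul_apply (m : ℕ) (a b : ℝ) (F : Fin (2*m+1) → ℝ) (i : Fin (2*m+1)) :
    (∑ l, Hmat (2*m) a b i l * F l) =
      (if h : (i:ℕ)+1 < 2*m+1 then sH a (i:ℕ) * F ⟨(i:ℕ)+1, h⟩ else 0) +
      (if 0 < (i:ℕ) then
        tH m b ((i:ℕ)-1) * F ⟨(i:ℕ)-1, lt_of_le_of_lt (Nat.sub_le _ _) i.isLt⟩ else 0) := by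
  have step : ∀ l : Fin (2*m+1), Hmat (2*m) a b i l * F l =
      (if (i:ℕ)+1 = (l:ℕ) then sH a (i:ℕ) * F l else 0) +
      (if (i:ℕ)-1 = (l:ℕ) ∧ 0 < (i:ℕ) then tH m b ((i:ℕ)-1) * F l else 0) := by
    intro l
    rw [Hmat_apply]
    by_cases h1 : (i:ℕ)+1 = (l:ℕ)
    · rw [if_pos h1, if_pos h1, if_neg (by omega)]; ring
    · rw [if_neg h1, if_neg h1, zero_add]
      by_cases h2 : (l:ℕ)+1 = (i:ℕ)
      · have e : (i:ℕ)-1 = (l:ℕ) := by omega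
        rw [if_pos h2, if_pos ⟨e, by omega⟩, e]
      · rw [if_neg h2, if_neg (by omega), zero_mul]
  rw [Finset.sum_congr rfl (fun l _ => step l), Finset.sum_add_distrib, sum_ite_val]
  by_cases hi : 0 < (i:ℕ)
  · simp only [hi, and_true, if_pos hi]
    rw [sum_ite_val, dif_pos (by omega : (i:ℕ)-1 < 2*m+1)]
    rfl
  · simp only [hi, and_false, if_false]
    simp


lemma Kmul_apply (m : ℕ) (a b : ℝ) (F : Fin (2*m+1) → ℝ) (j : Fin (2*m+1)) :
    (∑ l, F l * Kmat m a b l j) =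
      (if 0 < (j:ℕ) then
        F ⟨(j:ℕ)-1, lt_of_le_of_lt (Nat.sub_le _ _) j.isLt⟩ * uK m a b ((j:ℕ)-1) else 0) +
      (if h : (j:ℕ)+1 < 2*m+1 then F ⟨(j:ℕ)+1, h⟩ * lK m b (j:ℕ) else 0) := by
  have step : ∀ l : Fin (2*m+1), F l * Kmat m a b l j =
      (if (j:ℕ)-1 = (l:ℕ) ∧ 0 < (j:ℕ) then F l * uK m a b ((j:ℕ)-1) else 0) +
      (if (j:ℕ)+1 = (l:ℕ) then F l * lK m b (j:ℕ) else 0) := by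
    intro l
    show F l * (if (l:ℕ) = (j:ℕ) then 0
      else if (l:ℕ) + 1 = (j:ℕ) then uK m a b (l:ℕ)
      else if (j:ℕ) + 1 = (l:ℕ) then lK m b (j:ℕ) else 0) = _
    by_cases h0 : (l:ℕ) = (j:ℕ)
    · rw [if_pos h0, mul_zero, if_neg (by omega), if_neg (by omega)]; ring
    · rw [if_neg h0]
      by_cases h1 : (l:ℕ)+1 = (j:ℕ)
      · have e : (j:ℕ)-1 = (l:ℕ) := by omega
        rw [if_pos h1, if_pos ⟨e, by omega⟩, if_neg (by omega), e, add_zero]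
      · rw [if_neg h1]
        by_cases h2 : (j:ℕ)+1 = (l:ℕ)
        · rw [if_pos h2, if_neg (by omega), if_pos h2, zero_add]
        · rw [if_neg h2, if_neg (by omega), if_neg h2, mul_zero, add_zero]
  rw [Finset.sum_congr rfl (fun l _ => step l), Finset.sum_add_distrib, sum_ite_val]
  by_cases hj : 0 < (j:ℕ)
  · simp only [hj, and_true, if_pos hj]
    rw [sum_ite_val, dif_pos (by omega : (j:ℕ)-1 < 2*m+1)]
    rfl
  · simp only [hj, and_false, if_false]
    simp

lemma choose_id (q l : ℕ) :
    ((l:ℝ)+1) * (Nat.choose q (l+1) : ℝ) = ((q:ℝ)-(l:ℝ)) * (Nat.choose q l : ℝ) := by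
  rcases le_or_gt (l+1) q with h|h
  · have hN := Nat.choose_succ_right_eq q l
    have hR : ((Nat.choose q (l+1) * (l+1) : ℕ) : ℝ) = ((Nat.choose q l * (q - l) : ℕ) : ℝ) := by
      rw [hN]
    push_cast [Nat.cast_sub (by omega : l ≤ q)] at hR
    linarith [hR]
  · rcases Nat.lt_succ_iff.mp h |>.lt_or_eq with h2|h2
    · rw [Nat.choose_eq_zero_of_lt h2, Nat.choose_eq_zero_of_lt (by omega)]
      simp
    · rw [Nat.choose_eq_zero_of_lt (by omega)]
      rw [h2]
      simp

lemma choose_split (q l : ℕ) :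
    (Nat.choose (q+1) (l+1) : ℝ) = (Nat.choose q l : ℝ) + (Nat.choose q (l+1) : ℝ) := by
  exact_mod_cast congrArg (Nat.cast (R := ℝ)) (Nat.choose_succ_succ q l)

lemma key (m : ℕ) (a b : ℝ) : Hmat (2*m) a b * Pmat m = Pmat m * Kmat m a b := by
  ext i j
  rw [Matrix.mul_apply, Matrix.mul_apply, Hmul_apply, Kmul_apply]
  simp only [Pmat, Matrix.of_apply, Fin.val_mk]
  have him : (i:ℕ) < 2*m+1 := i.isLt
  have hjm : (j:ℕ) < 2*m+1 := j.isLt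
  obtain ⟨p, hp | hp⟩ := Nat.even_or_odd' (i:ℕ) <;>
    obtain ⟨q, hq | hq⟩ := Nat.even_or_odd' (j:ℕ) <;>
    rw [hp, hq]
  · -- i = 2p, j = 2q : same parity, everything vanishes
    have Z1 : (if h : 2*p+1 < 2*m+1 then sH a (2*p) * Pent (2*p+1) (2*q) else 0) = 0 := by
      split
      · simp only [Pent]; rw [if_neg (by omega), mul_zero]
      · rfl
    have Z2 : (if 0 < 2*p then tH m b (2*p-1) * Pent (2*p-1) (2*q) else 0) = 0 := by
      split
      · next h => simp only [Pent]; rw [if_neg (by omega), mul_zero]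
      · rfl
    have Z3 : (if 0 < 2*q then Pent (2*p) (2*q-1) * uK m a b (2*q-1) else 0) = 0 := by
      split
      · next h => simp only [Pent]; rw [if_neg (by omega), zero_mul]
      · rfl
    have Z4 : (if h : 2*q+1 < 2*m+1 then Pent (2*p) (2*q+1) * lK m b (2*q) else 0) = 0 := by
      split
      · simp only [Pent]; rw [if_neg (by omega), zero_mul]
      · rfl
    rw [Z1, Z2, Z3, Z4]
  · -- i = 2p, j = 2q+1 : main case A
    have hqm : q < m := by omega
    have hpm : p ≤ m := by omega
    rw [if_pos (show 0 < 2*q+1 by omega), dif_pos (show 2*q+1+1 < 2*m+1 by omega),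
        show 2*q+1-1 = 2*q by omega, show 2*q+1+1 = 2*q+2 by omega]
    simp only [Pent, uK, lK]
    rw [if_pos (show (2*p)%2 = (2*q)%2 by omega),
        if_pos (show (2*p)%2 = (2*q+2)%2 by omega),
        if_pos (show (2*q)%2 = 0 by omega),
        if_neg (show ¬((2*q+1)%2 = 0) by omega),
        show (2*p)/2 = p by omega, show (2*q)/2 = q by omega,
        show (2*q+2)/2 = q+1 by omega,
        show 2*m - 2*q = 2*(m-q) by omega,
        show 2*m - (2*q+1) = 2*(m-(q+1))+1 by omega]
    rcases Nat.eq_zero_or_pos p with rfl|hp1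
    · rw [dif_pos (show 2*0+1 < 2*m+1 by omega), if_neg (show ¬(0 < 2*0) by omega)]
      simp only [sH]
      rw [if_pos (show (2*0+1)%2 = (2*q+1)%2 by omega),
          if_neg (show ¬((2*0+1)%2 = 0) by omega),
          show (2*0+1)/2 = 0 by omega, show (2*q+1)/2 = q by omega]
      simp only [Nat.choose_zero_right]
      push_cast [Nat.cast_sub (show q+1 ≤ m by omega), Nat.cast_sub (show q ≤ m by omega)]
      ring
    · obtain ⟨pp, rfl⟩ : ∃ pp, p = pp+1 := ⟨p-1, by omega⟩
      have Fh := choose_id q pp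
      have Sh := choose_split q pp
      by_cases hpm2 : pp+1 < m
      · rw [dif_pos (show 2*(pp+1)+1 < 2*m+1 by omega),
            if_pos (show 0 < 2*(pp+1) by omega),
            show 2*(pp+1)-1 = 2*pp+1 by omega]
        simp only [sH, tH]
        rw [if_pos (show (2*(pp+1)+1)%2 = (2*q+1)%2 by omega),
            if_pos (show (2*pp+1)%2 = (2*q+1)%2 by omega),
            if_neg (show ¬((2*(pp+1)+1)%2 = 0) by omega),
            show 2*m - (2*pp+1) = 2*(m-(pp+1))+1 by omega,
            if_neg (show ¬((2*(m-(pp+1))+1)%2 = 0) by omega),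
            show (2*(pp+1)+1)/2 = pp+1 by omega, show (2*pp+1)/2 = pp by omega,
            show (2*q+1)/2 = q by omega]
        push_cast [Nat.cast_sub (show q+1 ≤ m by omega), Nat.cast_sub (show q ≤ m by omega),
          Nat.cast_sub (show pp+1 ≤ m by omega)]
        linear_combination (-2*(-1:ℝ)^pp) * Fh - ((-1:ℝ)^pp*(2*((m:ℝ)-(q:ℝ))-1+b)) * Sh
      · have hm : m = pp+1 := by omega
        subst hm
        have Zh : (Nat.choose q (pp+1) : ℝ) = 0 := by
          rw [Nat.choose_eq_zero_of_lt (by omega)]; norm_num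
        rw [dif_neg (show ¬(2*(pp+1)+1 < 2*(pp+1)+1) by omega),
            if_pos (show 0 < 2*(pp+1) by omega),
            show 2*(pp+1)-1 = 2*pp+1 by omega]
        simp only [tH]
        rw [if_pos (show (2*pp+1)%2 = (2*q+1)%2 by omega),
            show 2*(pp+1) - (2*pp+1) = 1 by omega,
            if_neg (show ¬((1:ℕ)%2 = 0) by omega),
            show (2*pp+1)/2 = pp by omega, show (2*q+1)/2 = q by omega]
        push_cast [Nat.cast_sub (show q+1 ≤ pp+1 by omega), Nat.cast_sub (show q ≤ pp+1 by omega),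
          Nat.cast_sub (show q ≤ pp by omega)]
        linear_combination (-(-1:ℝ)^pp*(2*(((pp:ℝ)+1)-(q:ℝ))-1+b)) * Sh + (-2*(-1:ℝ)^pp) * Fh
          + ((-1:ℝ)^pp*(2*((pp:ℝ)+1)+a+1)) * Zh
  · -- i = 2p+1, j = 2q : main case B
    have hpm : p < m := by omega
    have hqm : q ≤ m := by omega
    have Z3 : (if 0 < 2*q then Pent (2*p+1) (2*q-1) * uK m a b (2*q-1) else 0) = 0 := by
      split
      · next h => simp only [uK]; rw [if_neg (by omega), mul_zero]
      · rfl
    rw [Z3, dif_pos (show 2*p+1+1 < 2*m+1 by omega), if_pos (show 0 < 2*p+1 by omega),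
        show 2*p+1-1 = 2*p by omega, show 2*p+1+1 = 2*p+2 by omega]
    simp only [Pent, sH, tH, lK]
    rw [if_pos (show (2*p+2)%2 = (2*q)%2 by omega),
        if_pos (show (2*p)%2 = (2*q)%2 by omega),
        if_pos (show (2*p+1+1)%2 = 0 by omega),
        show 2*m - 2*p = 2*(m-p) by omega,
        if_pos (show (2*(m-p))%2 = 0 by omega),
        show (2*p+2)/2 = p+1 by omega, show (2*p)/2 = p by omega,
        show (2*q)/2 = q by omega]
    by_cases hqm2 : q < m
    · rw [dif_pos (show 2*q+1 < 2*m+1 by omega)]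
      rw [if_pos (show (2*p+1)%2 = (2*q+1)%2 by omega),
          show (2*p+1)/2 = p by omega, show (2*q+1)/2 = q by omega,
          if_pos (show (2*q)%2 = 0 by omega), show 2*m - 2*q = 2*(m-q) by omega]
      push_cast [Nat.cast_sub (show p ≤ m by omega), Nat.cast_sub (show q ≤ m by omega)]
      linear_combination (-2*(-1:ℝ)^p) * choose_id q p
    · have hq3 : q = m := by omega
      subst hq3
      rw [dif_neg (show ¬(2*q+1 < 2*q+1) by omega)]
      push_cast [Nat.cast_sub (show p ≤ q by omega)]
      linear_combination (-2*(-1:ℝ)^p) * choose_id q p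
  · -- i = 2p+1, j = 2q+1 : same parity
    have Z1 : (if h : 2*p+1+1 < 2*m+1 then sH a (2*p+1) * Pent (2*p+1+1) (2*q+1) else 0) = 0 := by
      split
      · simp only [Pent]; rw [if_neg (by omega), mul_zero]
      · rfl
    have Z2 : (if 0 < 2*p+1 then tH m b (2*p+1-1) * Pent (2*p+1-1) (2*q+1) else 0) = 0 := by
      split
      · simp only [Pent]; rw [if_neg (by omega), mul_zero]
      · rfl
    have Z3 : (if 0 < 2*q+1 then Pent (2*p+1) (2*q+1-1) * uK m a b (2*q+1-1) else 0) = 0 := by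
      split
      · simp only [Pent]; rw [if_neg (by omega), zero_mul]
      · rfl
    have Z4 : (if h : 2*q+1+1 < 2*m+1 then Pent (2*p+1) (2*q+1+1) * lK m b (2*q+1) else 0) = 0 := by
      split
      · simp only [Pent]; rw [if_neg (by omega), zero_mul]
      · rfl
    rw [Z1, Z2, Z3, Z4]


lemma Pmat_det_isUnit (m : ℕ) : IsUnit (Pmat m).det := by
  have hbt : (Pmat m).BlockTriangular id := by
    intro i j hij
    simp only [Pmat, Matrix.of_apply, Pent, id_eq] at *
    have hij' : (j:ℕ) < (i:ℕ) := hij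
    by_cases hpar : (i:ℕ)%2 = (j:ℕ)%2
    · rw [if_pos hpar, Nat.choose_eq_zero_of_lt (by omega)]
      simp
    · rw [if_neg hpar]
  rw [Matrix.det_of_upperTriangular hbt]
  have hdiag : ∀ i : Fin (2*m+1), Pmat m i i = (-1:ℝ)^((i:ℕ)/2) := by
    intro i; simp [Pmat, Pent]
  rw [Finset.prod_congr rfl (fun i _ => hdiag i), Finset.prod_pow_eq_pow_sum]
  exact (isUnit_one.neg).pow _

lemma charpoly_conj {sz : ℕ} (A B P : Matrix (Fin sz) (Fin sz) ℝ)
    (h : A * P = P * B) (hP : IsUnit P.det) : A.charpoly = B.charpoly := by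
  have h2 : (A * P).map (C : ℝ →+* ℝ[X]) = (P * B).map (C : ℝ →+* ℝ[X]) := by rw [h]
  rw [Matrix.map_mul, Matrix.map_mul] at h2
  have hc1 : Matrix.scalar (Fin sz) (X : ℝ[X]) * P.map (C : ℝ →+* ℝ[X])
      = P.map (C : ℝ →+* ℝ[X]) * Matrix.scalar (Fin sz) (X : ℝ[X]) :=
    (Matrix.scalar_commute X (fun r => Commute.all X r) _).eq
  have h1 : charmatrix A * P.map (C : ℝ →+* ℝ[X]) = P.map (C : ℝ →+* ℝ[X]) * charmatrix B := by
    unfold Matrix.charmatrix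
    rw [sub_mul, mul_sub, RingHom.mapMatrix_apply, RingHom.mapMatrix_apply, h2, hc1]
  have hdet := congrArg Matrix.det h1
  rw [Matrix.det_mul, Matrix.det_mul] at hdet
  have hu : ((P.map (C : ℝ →+* ℝ[X])).det) ≠ 0 := by
    rw [← RingHom.mapMatrix_apply, ← RingHom.map_det]
    exact (hP.map (C : ℝ →+* ℝ[X])).ne_zero
  unfold Matrix.charpoly
  exact mul_right_cancel₀ hu (hdet.trans (mul_comm _ _))

lemma charK (m : ℕ) (a b : ℝ) : charmatrix (Kmat m a b)
    = tri (fun _ => (X:ℝ[X])) (fun k => -C (uK m a b k)) (fun k => -C (lK m b k)) 0 (2*m+1) := by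
  ext i j
  by_cases hij : i = j
  · subst hij
    rw [charmatrix_apply_eq]
    simp [tri, Kmat]
  · have hvij : (i:ℕ) ≠ (j:ℕ) := fun hh => hij (Fin.ext hh)
    rw [charmatrix_apply_ne _ _ _ hij]
    simp only [Kmat, Matrix.of_apply, tri]
    rw [if_neg hvij, if_neg hvij]
    by_cases h1 : (i:ℕ)+1 = (j:ℕ)
    · rw [if_pos h1, if_pos h1, zero_add]
    · rw [if_neg h1, if_neg h1]
      by_cases h2 : (j:ℕ)+1 = (i:ℕ)
      · rw [if_pos h2, if_pos h2, zero_add]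
      · rw [if_neg h2, if_neg h2]
        simp

lemma charpolyK (m : ℕ) (a b : ℝ) :
    (Kmat m a b).charpoly
      = X * ∏ k ∈ Finset.Icc 1 m, (X^2 - C ((2*(k:ℝ)) * (2*(k:ℝ)+a+b))) := by
  rw [Matrix.charpoly, charK, det_tri]
  have hu : ∀ k, k % 2 = 1 → -C (uK m a b k) = (0 : ℝ[X]) := by
    intro k hk
    have hk' : ¬ (k % 2 = 0) := by omega
    simp [uK, hk']
  have hc := (contBC (X : ℝ[X]) (fun k => -C (uK m a b k)) (fun k => -C (lK m b k)) hu m).1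
    0 (by norm_num)
  rw [hc]
  congr 1
  rw [← Finset.Ico_add_one_right_eq_Icc, Finset.prod_Ico_eq_prod_range, show m+1-1 = m by omega]
  conv_rhs => rw [← Finset.prod_range_reflect]
  apply Finset.prod_congr rfl
  intro k hk
  have hk' : k < m := Finset.mem_range.mp hk
  rw [show 1+(m-1-k) = m-k by omega, show 0+2*k = 2*k by omega]
  simp only [uK, lK]
  rw [if_pos (show (2*k)%2 = 0 by omega), if_pos (show (2*k)%2 = 0 by omega),
      show 2*m - 2*k = 2*(m-k) by omega, neg_mul_neg, ← C_mul]
  congr 1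
  push_cast [Nat.cast_sub (show k ≤ m by omega)]
  ring

lemma eval_charpoly' {sz : ℕ} (A : Matrix (Fin sz) (Fin sz) ℝ) (x : ℝ) :
    (A.charpoly).eval x = (Matrix.scalar (Fin sz) x - A).det := by
  rw [Matrix.charpoly, ← Polynomial.coe_evalRingHom, RingHom.map_det]
  congr 1
  ext i j
  rw [RingHom.mapMatrix_apply]
  by_cases hij : i = j
  · subst hij
    rw [Matrix.map_apply, charmatrix_apply_eq]
    simp [Matrix.scalar, Matrix.sub_apply]
  · rw [Matrix.map_apply, charmatrix_apply_ne _ _ _ hij]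
    simp [Matrix.scalar, Matrix.sub_apply, Matrix.diagonal_apply_ne _ hij]

lemma mem_spectrum_iff' {sz : ℕ} (A : Matrix (Fin sz) (Fin sz) ℝ) (x : ℝ) :
    x ∈ spectrum ℝ A ↔ (A.charpoly).eval x = 0 := by
  have halg : algebraMap ℝ (Matrix (Fin sz) (Fin sz) ℝ) x = Matrix.scalar (Fin sz) x := by
    ext i j
    by_cases hij : i = j
    · subst hij; simp [Matrix.algebraMap_matrix_apply, Matrix.scalar]
    · simp [Matrix.algebraMap_matrix_apply, hij, Matrix.scalar, Matrix.diagonal_apply_ne _ hij]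
  rw [spectrum.mem_iff, halg, Matrix.isUnit_iff_isUnit_det, isUnit_iff_ne_zero, not_ne_iff,
    eval_charpoly']

end
end HmatAux


open HmatAux

/-- for `n = 2m` even, the characteristic polynomial of `H_n(a,b)` is
`λ ∏_{k=1}^m (λ² - 2k(2k+a+b))`; in particular the eigenvalues are `0` and
`±√(2k(2k+a+b))` for `k = 1, ..., m`. -/
theorem Hmat_even_charpoly (m : ℕ) (a b : ℝ) :
    (Hmat (2 * m) a b).charpoly
        = X * ∏ k ∈ Finset.Icc 1 m,
            (X ^ 2 - C ((2 * (k : ℝ)) * (2 * (k : ℝ) + a + b))) ∧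
      ∀ x : ℝ, x ∈ spectrum ℝ (Hmat (2 * m) a b) ↔
        x = 0 ∨ ∃ k ∈ Finset.Icc 1 m,
          x ^ 2 = (2 * (k : ℝ)) * (2 * (k : ℝ) + a + b) := by
  have hcp : (Hmat (2*m) a b).charpoly
      = X * ∏ k ∈ Finset.Icc 1 m, (X^2 - C ((2*(k:ℝ)) * (2*(k:ℝ)+a+b))) := by
    rw [charpoly_conj (Hmat (2*m) a b) (Kmat m a b) (Pmat m) (key m a b) (Pmat_det_isUnit m),
      charpolyK]
  refine ⟨hcp, ?_⟩
  intro x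
  rw [mem_spectrum_iff', hcp]
  simp only [eval_mul, eval_X, eval_prod, eval_sub, eval_pow, eval_C]
  rw [mul_eq_zero, Finset.prod_eq_zero_iff]
  constructor
  · rintro (h | ⟨k, hk, h⟩)
    · exact Or.inl h
    · exact Or.inr ⟨k, hk, by linarith⟩
  · rintro (rfl | ⟨k, hk, h⟩)
    · exact Or.inl rfl
    · exact Or.inr ⟨k, hk, by linarith⟩
end

section
/- For n = 2m+1 odd, the (n+1)×(n+1) matrix H_n(a,b) with superdiagonal entries h_{k,k+1} = k if k is even and k+a if k is odd, and subdiagonal entries h_{n+2-k,n+1-k} = k if k is even and k+b if k is odd (for k = 1,...,n), has characteristic polynomial ∏_{k=0}^{m} (λ² - (2k+1+a)(2k+1+b)). In particular its eigenvalues are ±√((2k+1+a)(2k+1+b)) for k = 0,...,m. -/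
/-!
Only the products `c k` of opposite off-diagonal entries enter the characteristic polynomial of a
tridiagonal matrix, and the leading principal minors of `X - H` obey
`D (k + 2) = X * D (k + 1) - c k * D k`. With `φ i = ∏_{k<i} (X² - (2k+1+a)(2k+1+b))`, the
minors of even and odd order expand as
`D (2r) = ∑ᵢ (r choose i) ∏_{k=i}^{r-1} 2(k-m) ∏_{k=i}^{r-1} (2k+1+a) φ i` and
`D (2r+1) = X ∑ᵢ (r choose i) ∏_{k=i}^{r-1} 2(k-m) ∏_{k=i+1}^{r} (2k+1+a) φ i`.
The coefficients do not involve `b`, and after `X² φ i = φ (i+1) + (2i+1+a)(2i+1+b) φ i` the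
recurrence reduces to Pascal's rule. At `r = m + 1` the factor `k = m` kills every coefficient
except that of `φ (m+1)`.
-/

open Polynomial

open Finset Matrix

namespace Matrix

variable {R : Type*} [CommRing R]

def tridiag (d s t : ℕ → R) (N : ℕ) : Matrix (Fin N) (Fin N) R :=
  of fun i j =>
    if (i : ℕ) = j then d i else if (i : ℕ) + 1 = j then s i
    else if (j : ℕ) + 1 = i then t j else 0

namespace tridiag

variable (d s t : ℕ → R)

lemma apply_eq_zero {N : ℕ} {i j : Fin N} (h : (i : ℕ) + 1 < j ∨ (j : ℕ) + 1 < i) :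
    tridiag d s t N i j = 0 := by
  simp only [tridiag, of_apply]
  split_ifs <;> first | rfl | omega

@[simp] lemma submatrix_castSucc (N : ℕ) :
    (tridiag d s t (N + 1)).submatrix Fin.castSucc Fin.castSucc = tridiag d s t N := by
  ext i j; simp [tridiag]

lemma det_succ_succ (N : ℕ) :
    (tridiag d s t (N + 2)).det
      = d (N + 1) * (tridiag d s t (N + 1)).det - s N * t N * (tridiag d s t N).det := by
  have hminor : ((tridiag d s t (N + 2)).submatrix (Fin.last N).castSucc.succAbove
      Fin.castSucc).det = t N * (tridiag d s t N).det := by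
    have hrows :
        (Fin.last N).castSucc.succAbove ∘ Fin.castSucc = Fin.castSucc ∘ Fin.castSucc := by
      funext j; exact Fin.succAbove_of_castSucc_lt _ _ (by simp [Fin.lt_def])
    have hzero : ∀ j : Fin N, tridiag d s t (N + 2) (Fin.last (N + 1)) j.castSucc.castSucc = 0 :=
      fun j => apply_eq_zero d s t (Or.inr (by simp))
    have hentry : tridiag d s t (N + 2) (Fin.last (N + 1)) (Fin.last N).castSucc = t N := by
      simp [tridiag, show N + 1 + 1 ≠ N by omega]
    rw [det_succ_row _ (Fin.last _), Fin.sum_univ_castSucc]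
    simp only [submatrix_apply, submatrix_submatrix, Fin.succAbove_last, hrows,
      Fin.succAbove_castSucc_self, Fin.succ_last, hzero, hentry]
    simp only [← submatrix_submatrix, submatrix_castSucc]
    simp
  have hzero : ∀ i : Fin N, tridiag d s t (N + 2) i.castSucc.castSucc (Fin.last _) = 0 :=
    fun i => apply_eq_zero d s t (Or.inl (by simp))
  rw [det_succ_column _ (Fin.last _), Fin.sum_univ_castSucc, Fin.sum_univ_castSucc]
  simp only [Fin.succAbove_last, hminor, hzero, submatrix_castSucc]
  simp [tridiag]
  ring

lemma charmatrix_eq (N : ℕ) :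
    charmatrix (tridiag d s t N)
      = tridiag (fun i => X - C (d i)) (fun i => -C (s i)) (fun j => -C (t j)) N := by
  ext i j
  by_cases hij : i = j
  · subst hij; simp [charmatrix_apply_eq, tridiag]
  · have hij' : (i : ℕ) ≠ j := Fin.val_ne_of_ne hij
    rw [charmatrix_apply_ne _ _ _ hij]
    simp only [tridiag, of_apply, if_neg hij']
    split_ifs <;> simp

@[simp] lemma charpoly_zero : (tridiag d s t 0).charpoly = 1 := by
  simp [Matrix.charpoly]

@[simp] lemma charpoly_one : (tridiag d s t 1).charpoly = X - C (d 0) := by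
  simp [Matrix.charpoly, tridiag]

lemma charpoly_succ_succ (N : ℕ) :
    (tridiag d s t (N + 2)).charpoly
      = (X - C (d (N + 1))) * (tridiag d s t (N + 1)).charpoly
        - C (s N * t N) * (tridiag d s t N).charpoly := by
  simp only [Matrix.charpoly, charmatrix_eq, det_succ_succ, C_mul]
  ring

end tridiag

end Matrix

namespace Hmat

def superdiag (a : ℝ) (k : ℕ) : ℝ :=
  if (k + 1) % 2 = 0 then (k + 1 : ℝ) else (k + 1 : ℝ) + a

def subdiag (n : ℕ) (b : ℝ) (k : ℕ) : ℝ :=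
  if (n - k) % 2 = 0 then ((n - k : ℕ) : ℝ) else ((n - k : ℕ) : ℝ) + b

lemma eq_tridiag (n : ℕ) (a b : ℝ) :
    Hmat n a b = tridiag 0 (superdiag a) (subdiag n b) (n + 1) := by
  ext i j
  simp only [Hmat, tridiag, superdiag, subdiag, of_apply, Pi.zero_apply]
  split_ifs <;> first | rfl | omega

lemma superdiag_mul_subdiag_even (m : ℕ) (a b : ℝ) {r : ℕ} (hr : r ≤ m) :
    superdiag a (2 * r) * subdiag (2 * m + 1) b (2 * r)
      = (2 * r + 1 + a) * (2 * m + 1 - 2 * r + b) := by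
  rw [superdiag, subdiag, if_neg (by omega), if_neg (by omega), Nat.cast_sub (by omega)]
  push_cast; ring

lemma superdiag_mul_subdiag_odd (m : ℕ) (a b : ℝ) {r : ℕ} (hr : r ≤ m) :
    superdiag a (2 * r + 1) * subdiag (2 * m + 1) b (2 * r + 1)
      = (2 * r + 2) * (2 * m - 2 * r) := by
  rw [superdiag, subdiag, if_pos (by omega), if_pos (by omega), Nat.cast_sub (by omega)]
  push_cast; ring

end Hmat

section Expansion

variable (m : ℕ) (a b : ℝ)

noncomputable def partialCharpoly (i : ℕ) : ℝ[X] :=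
  ∏ k ∈ range i, (X ^ 2 - C ((2 * k + 1 + a) * (2 * k + 1 + b)))

lemma X_sq_mul_partialCharpoly (i : ℕ) :
    X ^ 2 * partialCharpoly a b i
      = partialCharpoly a b (i + 1)
        + C ((2 * i + 1 + a) * (2 * i + 1 + b)) * partialCharpoly a b i := by
  rw [partialCharpoly, partialCharpoly, prod_range_succ]
  ring

def evenCoeff (r i : ℕ) : ℝ :=
  r.choose i * (∏ k ∈ Ico i r, 2 * ((k : ℝ) - m)) * ∏ k ∈ Ico i r, (2 * k + 1 + a)

def oddCoeff (r i : ℕ) : ℝ :=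
  r.choose i * (∏ k ∈ Ico i r, 2 * ((k : ℝ) - m))
    * ∏ k ∈ Ico (i + 1) (r + 1), (2 * k + 1 + a)

lemma evenCoeff_self (r : ℕ) : evenCoeff m a r r = 1 := by simp [evenCoeff]

lemma evenCoeff_of_lt {r i : ℕ} (h : r < i) : evenCoeff m a r i = 0 := by
  simp [evenCoeff, Nat.choose_eq_zero_of_lt h]

lemma oddCoeff_of_lt {r i : ℕ} (h : r < i) : oddCoeff m a r i = 0 := by
  simp [oddCoeff, Nat.choose_eq_zero_of_lt h]

lemma evenCoeff_succ_eq_zero {i : ℕ} (h : i ≤ m) : evenCoeff m a (m + 1) i = 0 := by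
  rw [evenCoeff, prod_eq_zero (i := m) (by simp; omega) (by simp), mul_zero, zero_mul]

lemma mul_oddCoeff (r i : ℕ) :
    (2 * i + 1 + a) * oddCoeff m a r i = (2 * r + 1 + a) * evenCoeff m a r i := by
  rcases le_or_gt i r with hir | hri
  · have htop := prod_Ico_succ_top hir (fun k : ℕ => (2 * k + 1 + a : ℝ))
    have hbot :=
      prod_eq_prod_Ico_succ_bot (Nat.lt_succ_of_le hir) (fun k : ℕ => (2 * k + 1 + a : ℝ))
    simp only [evenCoeff, oddCoeff]
    linear_combination (r.choose i : ℝ) * (∏ k ∈ Ico i r, 2 * ((k : ℝ) - m)) * (htop - hbot)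
  · rw [oddCoeff_of_lt m a hri, evenCoeff_of_lt m a hri]; ring

lemma evenCoeff_succ_zero (r : ℕ) :
    evenCoeff m a (r + 1) 0 = (2 * r + 1 + a) * (2 * r - 2 * m) * evenCoeff m a r 0 := by
  simp only [evenCoeff, Nat.choose_zero_right, Nat.cast_one, one_mul,
    prod_Ico_succ_top (Nat.zero_le r)]
  ring

lemma evenCoeff_succ_succ (r i : ℕ) :
    evenCoeff m a (r + 1) (i + 1)
      = oddCoeff m a r i
        + (2 * r + 1 + a) * (2 * (i + 1) + 2 * r - 2 * m) * evenCoeff m a r (i + 1) := by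
  rcases lt_or_ge i r with hir | hri
  · have hpascal : ((r + 1).choose (i + 1) : ℝ) = r.choose i + r.choose (i + 1) := by
      exact_mod_cast Nat.choose_succ_succ' r i
    have habsorb : (r.choose (i + 1) : ℝ) * (i + 1) = r.choose i * (r - i) := by
      rw [← Nat.cast_sub hir.le]; exact_mod_cast Nat.choose_succ_right_eq r i
    have hG1 := prod_Ico_succ_top hir (fun k : ℕ => 2 * ((k : ℝ) - m))
    have hG2 := prod_eq_prod_Ico_succ_bot hir (fun k : ℕ => 2 * ((k : ℝ) - m))
    have hA := prod_Ico_succ_top hir (fun k : ℕ => (2 * k + 1 + a : ℝ))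
    simp only [evenCoeff, oddCoeff]
    rw [hG1, hG2, hA, hpascal]
    linear_combination (-2) * (∏ k ∈ Ico (i + 1) r, 2 * ((k : ℝ) - m)) *
      (∏ k ∈ Ico (i + 1) r, (2 * k + 1 + a : ℝ)) * (2 * r + 1 + a) * habsorb
  · have hpascal : (r + 1).choose (i + 1) = r.choose i := by
      rw [Nat.choose_succ_succ', Nat.choose_eq_zero_of_lt (show r < i + 1 by omega), add_zero]
    simp [evenCoeff, oddCoeff, Nat.choose_eq_zero_of_lt (show r < i + 1 by omega),
      Ico_eq_empty_of_le hri, Ico_eq_empty_of_le (show r + 1 ≤ i + 1 by omega), hpascal]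

lemma oddCoeff_succ (r i : ℕ) :
    oddCoeff m a (r + 1) i
      = evenCoeff m a (r + 1) i - (2 * r + 2) * (2 * m - 2 * r) * oddCoeff m a r i := by
  rcases le_or_gt i r with hir | hri
  · have habsorb : ((r + 1).choose i : ℝ) * (r + 1 - i) = r.choose i * (r + 1) := by
      have h := congrArg (Nat.cast : ℕ → ℝ) (Nat.choose_mul_succ_eq r i)
      push_cast [Nat.cast_sub (Nat.le_succ_of_le hir)] at h
      linarith
    have hG := prod_Ico_succ_top hir (fun k : ℕ => 2 * ((k : ℝ) - m))
    have hA1 := prod_Ico_succ_top (Nat.succ_le_succ hir) (fun k : ℕ => (2 * k + 1 + a : ℝ))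
    have hA2 :=
      prod_eq_prod_Ico_succ_bot (Nat.lt_succ_of_le hir) (fun k : ℕ => (2 * k + 1 + a : ℝ))
    simp only [evenCoeff, oddCoeff]
    rw [hG, hA1, hA2]
    push_cast
    linear_combination 4 * ((r : ℝ) - m) * (∏ k ∈ Ico i r, 2 * ((k : ℝ) - m)) *
      (∏ k ∈ Ico (i + 1) (r + 1), (2 * k + 1 + a : ℝ)) * habsorb
  · simp [evenCoeff, oddCoeff, Nat.choose_eq_zero_of_lt hri,
      Ico_eq_empty_of_le (show r + 1 ≤ i by omega),
      Ico_eq_empty_of_le (show r + 2 ≤ i + 1 by omega)]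

end Expansion

section Minors

variable (m : ℕ) (a b : ℝ)

noncomputable def evenMinor (r : ℕ) : ℝ[X] :=
  ∑ i ∈ range (r + 1), C (evenCoeff m a r i) * partialCharpoly a b i

noncomputable def oddMinor (r : ℕ) : ℝ[X] :=
  X * ∑ i ∈ range (r + 1), C (oddCoeff m a r i) * partialCharpoly a b i

lemma evenMinor_zero : evenMinor m a b 0 = 1 := by
  simp [evenMinor, evenCoeff, partialCharpoly]

lemma oddMinor_zero : oddMinor m a b 0 = X := by
  simp [oddMinor, oddCoeff, partialCharpoly]

lemma evenMinor_succ_self : evenMinor m a b (m + 1) = partialCharpoly a b (m + 1) := by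
  rw [evenMinor, sum_range_succ, evenCoeff_self, sum_eq_zero fun i hi => by
    rw [evenCoeff_succ_eq_zero m a (Nat.lt_succ_iff.mp (mem_range.mp hi)), C_0, zero_mul]]
  simp

lemma X_mul_oddMinor_sub (r : ℕ) :
    X * oddMinor m a b r - C ((2 * r + 1 + a) * (2 * m + 1 - 2 * r + b)) * evenMinor m a b r
      = evenMinor m a b (r + 1) := by
  set w : ℕ → ℝ := fun i => (2 * r + 1 + a) * (2 * i + 2 * r - 2 * m) * evenCoeff m a r i
    with hw
  -- the terms in `b` cancel
  have hcoeff : ∀ i, (2 * i + 1 + a) * (2 * i + 1 + b) * oddCoeff m a r i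
      - (2 * r + 1 + a) * (2 * m + 1 - 2 * r + b) * evenCoeff m a r i = w i := fun i => by
    linear_combination (2 * (i : ℝ) + 1 + b) * mul_oddCoeff m a r i
  calc X * oddMinor m a b r - C ((2 * r + 1 + a) * (2 * m + 1 - 2 * r + b)) * evenMinor m a b r
      = ∑ i ∈ range (r + 1), (C (oddCoeff m a r i) * partialCharpoly a b (i + 1)
          + C (w i) * partialCharpoly a b i) := by
        rw [oddMinor, evenMinor, ← mul_assoc, ← sq, mul_sum, mul_sum, ← sum_sub_distrib]
        refine sum_congr rfl fun i _ => ?_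
        rw [mul_left_comm, X_sq_mul_partialCharpoly, ← hcoeff]
        simp only [C_mul, C_sub]
        ring
    _ = ∑ i ∈ range (r + 1), C (oddCoeff m a r i) * partialCharpoly a b (i + 1)
          + ∑ i ∈ range (r + 2), C (w i) * partialCharpoly a b i := by
        rw [sum_add_distrib, sum_range_succ _ (r + 1), hw]
        simp [evenCoeff_of_lt m a (Nat.lt_succ_self r)]
    _ = evenMinor m a b (r + 1) := by
        rw [evenMinor, sum_range_succ' (fun i => C (w i) * partialCharpoly a b i),
          sum_range_succ' (fun i => C (evenCoeff m a (r + 1) i) * partialCharpoly a b i),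
          ← add_assoc, ← sum_add_distrib]
        congr 1
        · refine sum_congr rfl fun i _ => ?_
          rw [evenCoeff_succ_succ, hw, C_add, add_mul]
          push_cast; ring_nf
        · rw [evenCoeff_succ_zero, hw]
          push_cast; ring_nf

lemma X_mul_evenMinor_sub (r : ℕ) :
    X * evenMinor m a b (r + 1) - C ((2 * (r : ℝ) + 2) * (2 * m - 2 * r)) * oddMinor m a b r
      = oddMinor m a b (r + 1) := by
  have hext : ∑ i ∈ range (r + 1), C (oddCoeff m a r i) * partialCharpoly a b i
      = ∑ i ∈ range (r + 2), C (oddCoeff m a r i) * partialCharpoly a b i := by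
    simp [sum_range_succ _ (r + 1), oddCoeff_of_lt m a (Nat.lt_succ_self r)]
  rw [oddMinor, oddMinor, evenMinor, hext, mul_left_comm, ← mul_sub, mul_sum,
    ← sum_sub_distrib]
  congr 1
  refine sum_congr rfl fun i _ => ?_
  rw [oddCoeff_succ]
  simp only [map_sub, map_mul]
  ring

end Minors

lemma charpoly_tridiag_Hmat (m : ℕ) (a b : ℝ) {r : ℕ} (hr : r ≤ m) :
    (tridiag 0 (Hmat.superdiag a) (Hmat.subdiag (2 * m + 1) b) (2 * r)).charpoly
        = evenMinor m a b r ∧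
      (tridiag 0 (Hmat.superdiag a) (Hmat.subdiag (2 * m + 1) b) (2 * r + 1)).charpoly
        = oddMinor m a b r := by
  induction r with
  | zero => simp [evenMinor_zero, oddMinor_zero]
  | succ r ih =>
    obtain ⟨heven, hodd⟩ := ih (by omega)
    have heven' :
        (tridiag 0 (Hmat.superdiag a) (Hmat.subdiag (2 * m + 1) b) (2 * r + 2)).charpoly
          = evenMinor m a b (r + 1) := by
      rw [tridiag.charpoly_succ_succ, heven, hodd,
        Hmat.superdiag_mul_subdiag_even m a b (by omega), Pi.zero_apply, C_0, sub_zero,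
        X_mul_oddMinor_sub]
    refine ⟨heven', ?_⟩
    rw [show 2 * (r + 1) + 1 = 2 * r + 1 + 2 by ring, tridiag.charpoly_succ_succ, heven', hodd,
      Hmat.superdiag_mul_subdiag_odd m a b (by omega), Pi.zero_apply, C_0, sub_zero,
      X_mul_evenMinor_sub]

lemma charpoly_Hmat_odd (m : ℕ) (a b : ℝ) :
    (Hmat (2 * m + 1) a b).charpoly = partialCharpoly a b (m + 1) := by
  rw [Hmat.eq_tridiag, show 2 * m + 1 + 1 = 2 * m + 2 by ring, tridiag.charpoly_succ_succ,
    (charpoly_tridiag_Hmat m a b le_rfl).1, (charpoly_tridiag_Hmat m a b le_rfl).2,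
    Hmat.superdiag_mul_subdiag_even m a b le_rfl, Pi.zero_apply, C_0, sub_zero,
    X_mul_oddMinor_sub, evenMinor_succ_self]

/-- for `n = 2m+1` odd, the characteristic polynomial of `H_n(a,b)` is
`∏_{k=0}^m (λ² - (2k+1+a)(2k+1+b))`; in particular the eigenvalues are
`±√((2k+1+a)(2k+1+b))` for `k = 0, ..., m`. -/
theorem Hmat_odd_charpoly (m : ℕ) (a b : ℝ) :
    (Hmat (2 * m + 1) a b).charpoly
        = ∏ k ∈ Finset.range (m + 1),
            (X ^ 2 - C ((2 * (k : ℝ) + 1 + a) * (2 * (k : ℝ) + 1 + b))) ∧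
      ∀ x : ℝ, x ∈ spectrum ℝ (Hmat (2 * m + 1) a b) ↔
        ∃ k ∈ Finset.range (m + 1),
          x ^ 2 = (2 * (k : ℝ) + 1 + a) * (2 * (k : ℝ) + 1 + b) := by
  refine ⟨charpoly_Hmat_odd m a b, fun x => ?_⟩
  rw [mem_spectrum_iff_isRoot_charpoly, charpoly_Hmat_odd, partialCharpoly, IsRoot, eval_prod,
    prod_eq_zero_iff]
  simp only [eval_sub, eval_pow, eval_X, eval_C, sub_eq_zero]
end

section
/- For n = 2m+1 odd and any real a, the eigenvalues of H_n(a,a) are ±(2k+1+a) for k = 0,...,m; equivalently its characteristic polynomial is ∏_{k=0}^{m} (λ² - (2k+1+a)²). -/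
open Polynomial Matrix Finset

section Tridiagonal

variable {R : Type*} [CommRing R]

variable {R : Type*} [CommRing R]

def triM (d u l : ℕ → R) (N : ℕ) : Matrix (Fin N) (Fin N) R :=
  Matrix.of fun i j =>
    if (i : ℕ) + 1 = (j : ℕ) then u i
    else if (j : ℕ) + 1 = (i : ℕ) then l j
    else if (i : ℕ) = (j : ℕ) then d i else 0

lemma triM_apply (d u l : ℕ → R) (N : ℕ) (i j : Fin N) :
    triM d u l N i j =
      if (i : ℕ) + 1 = (j : ℕ) then u i
      else if (j : ℕ) + 1 = (i : ℕ) then l j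
      else if (i : ℕ) = (j : ℕ) then d i else 0 := rfl

lemma triM_apply' (d u l : ℕ → R) (N : ℕ) (i j : Fin N) (i' j' : ℕ)
    (hi : (i : ℕ) = i') (hj : (j : ℕ) = j') :
    triM d u l N i j =
      if i' + 1 = j' then u i'
      else if j' + 1 = i' then l j'
      else if i' = j' then d i' else 0 := by
  subst hi; subst hj; rfl

lemma triM_eq_of_coe (d u l : ℕ → R) {N M : ℕ} (i j : Fin N) (i' j' : Fin M)
    (hi : (i : ℕ) = (i' : ℕ)) (hj : (j : ℕ) = (j' : ℕ)) :
    triM d u l N i j = triM d u l M i' j' := by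
  rw [triM_apply' d u l N i j i' j' hi hj, triM_apply]

lemma coe_succAbove_castSucc_last {N : ℕ} (k : Fin (N + 1)) :
    (((Fin.last N).castSucc.succAbove k : Fin (N + 2)) : ℕ)
      = if (k : ℕ) < N then (k : ℕ) else (k : ℕ) + 1 := by
  rcases lt_or_ge ((k : ℕ)) N with h | h
  · rw [Fin.succAbove_of_castSucc_lt]
    · simp [h]
    · simpa [Fin.lt_def] using h
  · rw [Fin.succAbove_of_le_castSucc]
    · simp [not_lt.mpr h]
    · simpa [Fin.le_def] using h

lemma triM_det_succ_succ (d u l : ℕ → R) (N : ℕ) :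
    (triM d u l (N + 2)).det
      = d (N + 1) * (triM d u l (N + 1)).det - u N * l N * (triM d u l N).det := by
  rw [Matrix.det_succ_row _ (Fin.last (N + 1))]
  rw [Fin.sum_univ_castSucc, Fin.sum_univ_castSucc]
  have hz : ∀ j : Fin N,
      (-1 : R) ^ ((Fin.last (N+1) : ℕ) + ((j.castSucc.castSucc : Fin (N+2)) : ℕ))
        * triM d u l (N+2) (Fin.last (N+1)) j.castSucc.castSucc
        * ((triM d u l (N+2)).submatrix (Fin.last (N+1)).succAbove
            (j.castSucc.castSucc).succAbove).det = 0 := by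
    intro j
    have hj : (j : ℕ) < N := j.isLt
    have : triM d u l (N+2) (Fin.last (N+1)) j.castSucc.castSucc = 0 := by
      rw [triM_apply' d u l _ _ _ (N+1) (j : ℕ) (by simp) (by simp)]
      rw [if_neg (by omega), if_neg (by omega), if_neg (by omega)]
    rw [this]; ring
  rw [Finset.sum_eq_zero fun j _ => hz j, zero_add]
  have hlast : triM d u l (N+2) (Fin.last (N+1)) (Fin.last (N+1)) = d (N+1) := by
    rw [triM_apply' d u l _ _ _ (N+1) (N+1) (by simp) (by simp)]
    rw [if_neg (by omega), if_neg (by omega), if_pos rfl]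
  have hsub : triM d u l (N+2) (Fin.last (N+1)) ((Fin.last N).castSucc) = l N := by
    rw [triM_apply' d u l _ _ _ (N+1) N (by simp) (by simp)]
    rw [if_neg (by omega), if_pos rfl]
  -- main minor for j = last : submatrix castSucc castSucc = triM (N+1)
  have hM1 : (triM d u l (N+2)).submatrix (Fin.last (N+1)).succAbove
      (Fin.last (N+1)).succAbove = triM d u l (N+1) := by
    ext i j
    rw [Fin.succAbove_last, Matrix.submatrix_apply]
    exact triM_eq_of_coe d u l _ _ i j (by simp) (by simp)
  -- minor for j = castSucc (last N)
  set g := ((Fin.last N).castSucc : Fin (N+2)).succAbove with hg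
  have hM2 : ((triM d u l (N+2)).submatrix (Fin.last (N+1)).succAbove g).det
      = u N * (triM d u l N).det := by
    rw [Matrix.det_succ_column _ (Fin.last N)]
    rw [Fin.sum_univ_castSucc]
    have hz2 : ∀ i : Fin N,
        (-1 : R) ^ (((i.castSucc : Fin (N+1)) : ℕ) + ((Fin.last N : Fin (N+1)) : ℕ))
          * ((triM d u l (N+2)).submatrix (Fin.last (N+1)).succAbove g) i.castSucc (Fin.last N)
          * ((((triM d u l (N+2)).submatrix (Fin.last (N+1)).succAbove g).submatrix
              (i.castSucc).succAbove (Fin.last N).succAbove)).det = 0 := by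
      intro i
      have hi : (i : ℕ) < N := i.isLt
      have : ((triM d u l (N+2)).submatrix (Fin.last (N+1)).succAbove g) i.castSucc (Fin.last N) = 0 := by
        rw [Matrix.submatrix_apply, Fin.succAbove_last]
        rw [triM_apply' d u l _ _ _ (i : ℕ) (N+1) (by simp)
          (by rw [hg, coe_succAbove_castSucc_last]; simp)]
        rw [if_neg (by omega), if_neg (by omega), if_neg (by omega)]
      rw [this]; ring
    rw [Finset.sum_eq_zero fun i _ => hz2 i, zero_add]
    have hent : ((triM d u l (N+2)).submatrix (Fin.last (N+1)).succAbove g) (Fin.last N) (Fin.last N) = u N := by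
      rw [Matrix.submatrix_apply, Fin.succAbove_last]
      rw [triM_apply' d u l _ _ _ N (N+1) (by simp)
        (by rw [hg, coe_succAbove_castSucc_last]; simp)]
      rw [if_pos rfl]
    have hM3 : (((triM d u l (N+2)).submatrix (Fin.last (N+1)).succAbove g).submatrix
        (Fin.last N).succAbove (Fin.last N).succAbove) = triM d u l N := by
      ext i j
      rw [Fin.succAbove_last, Matrix.submatrix_apply, Matrix.submatrix_apply, Fin.succAbove_last]
      refine triM_eq_of_coe d u l _ _ i j (by simp) ?_
      rw [hg, coe_succAbove_castSucc_last]
      simp [j.isLt]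
    rw [hent, hM3]
    have : ((-1 : R)) ^ (((Fin.last N : Fin (N+1)) : ℕ) + ((Fin.last N : Fin (N+1)) : ℕ)) = 1 :=
      Even.neg_one_pow ⟨N, by simp only [Fin.val_last, Fin.coe_castSucc]⟩
    rw [this]; ring
  rw [hlast, hM1, hsub, hM2]
  have h1 : ((-1 : R)) ^ ((Fin.last (N+1) : ℕ) + ((Fin.last (N+1) : Fin (N+2)) : ℕ)) = 1 :=
    Even.neg_one_pow ⟨N+1, by simp only [Fin.val_last, Fin.coe_castSucc]⟩
  have h2 : ((-1 : R)) ^ ((Fin.last (N+1) : ℕ) + (((Fin.last N).castSucc : Fin (N+2)) : ℕ)) = -1 :=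
    Odd.neg_one_pow ⟨N, by simp only [Fin.val_last, Fin.coe_castSucc]; omega⟩
  rw [h1, h2]
  ring

end Tridiagonal

/-- Coefficients in the closed form of the leading principal minors. -/
noncomputable def bet (m r s : ℕ) : ℝ :=
  if s ≤ r then (-2 : ℝ) ^ (r - s) * (r.descFactorial (r - s)) * ((m - s).choose (r - s)) else 0

lemma bet_self (m r : ℕ) : bet m r r = 1 := by simp [bet]

lemma bet_of_gt (m r s : ℕ) (h : r < s) : bet m r s = 0 := by
  rw [bet, if_neg (by omega)]

lemma bet_top_zero (m s : ℕ) (hs : s ≤ m) : bet m (m + 1) s = 0 := by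
  rw [bet, if_pos (by omega), Nat.choose_eq_zero_of_lt (by omega)]
  simp

/-- Identity (A). -/
lemma betA (m r s : ℕ) (hs : s ≤ r) (hr : r ≤ m) :
    2 * ((r : ℝ) + 1 - s) * bet m (r + 1) s = -(4 * ((r : ℝ) + 1) * ((m : ℝ) - r)) * bet m r s := by
  obtain ⟨k, rfl⟩ : ∃ k, r = s + k := ⟨r - s, by omega⟩
  obtain ⟨t, rfl⟩ : ∃ t, m = s + k + t := ⟨m - (s + k), by omega⟩
  rw [bet, if_pos (by omega), bet, if_pos (by omega)]
  have h1 : s + k + 1 - s = k + 1 := by omega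
  have h2 : s + k - s = k := by omega
  have h3 : s + k + t - s = k + t := by omega
  rw [h1, h2, h3]
  have hD : (s + k + 1).descFactorial (k + 1) = (s + k + 1) * (s + k).descFactorial k :=
    Nat.succ_descFactorial_succ (s + k) k
  have hC : (k + t).choose (k + 1) * (k + 1) = (k + t).choose k * t := by
    have := Nat.choose_succ_right_eq (k + t) k
    rwa [Nat.add_sub_cancel_left] at this
  have hD' : ((s + k + 1).descFactorial (k + 1) : ℝ)
      = ((s : ℝ) + k + 1) * ((s + k).descFactorial k : ℝ) := by exact_mod_cast congrArg Nat.cast hD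
  have hC' : ((k + t).choose (k + 1) : ℝ) * ((k : ℝ) + 1) = ((k + t).choose k : ℝ) * t := by
    exact_mod_cast congrArg Nat.cast hC
  rw [hD']
  push_cast
  rw [pow_succ]
  linear_combination (2 * ((s:ℝ) + k + 1) * (-2:ℝ)^k * ((s + k).descFactorial k : ℝ) * (-2)) * hC'

/-- Identity (B), shifted form. -/
lemma betB (m r s : ℕ) (hs : s ≤ r) (hr : r ≤ m) :
    bet m (r + 1) (s + 1) = bet m r s - 2 * ((m : ℝ) - r - (s + 1)) * bet m r (s + 1) := by
  rcases eq_or_lt_of_le hs with rfl | hlt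
  · rw [bet_self, bet_self, bet_of_gt m s (s+1) (by omega)]
    ring
  · obtain ⟨k, rfl⟩ : ∃ k, r = s + 1 + k := ⟨r - s - 1, by omega⟩
    obtain ⟨t, rfl⟩ : ∃ t, m = s + 1 + k + t := ⟨m - (s + 1 + k), by omega⟩
    rw [bet, if_pos (by omega), bet, if_pos (by omega), bet, if_pos (by omega)]
    have h1 : s + 1 + k + 1 - (s + 1) = k + 1 := by omega
    have h2 : s + 1 + k - s = k + 1 := by omega
    have h3 : s + 1 + k + t - s = k + t + 1 := by omega
    have h4 : s + 1 + k - (s + 1) = k := by omega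
    have h5 : s + 1 + k + t - (s + 1) = k + t := by omega
    rw [h1, h2, h3, h4, h5]
    -- descFactorial relations
    have hD1 : (s + 1 + k + 1).descFactorial (k + 1)
        = (s + 1 + k + 1) * (s + 1 + k).descFactorial k := Nat.succ_descFactorial_succ _ k
    have hD2 : (s + 1 + k).descFactorial (k + 1) = (s + 1) * (s + 1 + k).descFactorial k := by
      rw [Nat.descFactorial_succ]
      congr 1
      omega
    have hP : (k + t + 1).choose (k + 1) = (k + t).choose k + (k + t).choose (k + 1) :=
      Nat.choose_succ_succ _ _
    have hAbs : (k + t).choose (k + 1) * (k + 1) = (k + t).choose k * t := by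
      have := Nat.choose_succ_right_eq (k + t) k
      rwa [Nat.add_sub_cancel_left] at this
    have hD1' : ((s + 1 + k + 1).descFactorial (k + 1) : ℝ)
        = ((s : ℝ) + 1 + k + 1) * ((s + 1 + k).descFactorial k : ℝ) := by
      exact_mod_cast congrArg Nat.cast hD1
    have hD2' : ((s + 1 + k).descFactorial (k + 1) : ℝ)
        = ((s : ℝ) + 1) * ((s + 1 + k).descFactorial k : ℝ) := by
      exact_mod_cast congrArg Nat.cast hD2
    have hP' : ((k + t + 1).choose (k + 1) : ℝ)
        = ((k + t).choose k : ℝ) + ((k + t).choose (k + 1) : ℝ) := by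
      exact_mod_cast congrArg Nat.cast hP
    have hAbs' : ((k + t).choose (k + 1) : ℝ) * ((k : ℝ) + 1) = ((k + t).choose k : ℝ) * t := by
      exact_mod_cast congrArg Nat.cast hAbs
    rw [hD1', hD2', hP']
    push_cast
    rw [pow_succ]
    linear_combination ((-2:ℝ)^k * (-2) * ((s + 1 + k).descFactorial k : ℝ)) * hAbs'

/-- `∏_{k<s} (X² - (2k+1+a)²)`. -/
noncomputable def Qp (a : ℝ) (s : ℕ) : ℝ[X] :=
  ∏ k ∈ Finset.range s, (X ^ 2 - C ((2 * (k : ℝ) + 1 + a) ^ 2))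

/-- `∏_{j=s}^{r-1} (2j+1+a)`. -/
noncomputable def P1 (a : ℝ) (s r : ℕ) : ℝ :=
  ∏ i ∈ Finset.range (r - s), (2 * ((s : ℝ) + i) + 1 + a)

/-- `∏_{j=s}^{r-1} (2j+3+a)`. -/
noncomputable def P3 (a : ℝ) (s r : ℕ) : ℝ :=
  ∏ i ∈ Finset.range (r - s), (2 * ((s : ℝ) + i) + 3 + a)

lemma P1_self (a : ℝ) (s : ℕ) : P1 a s s = 1 := by simp [P1]
lemma P3_self (a : ℝ) (s : ℕ) : P3 a s s = 1 := by simp [P3]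

lemma Qp_succ (a : ℝ) (s : ℕ) :
    Qp a (s + 1) = Qp a s * (X ^ 2 - C ((2 * (s : ℝ) + 1 + a) ^ 2)) := by
  rw [Qp, Finset.prod_range_succ]; rfl

lemma cast_sub_add (s r : ℕ) (h : s ≤ r) : ((s : ℝ)) + ((r - s : ℕ) : ℝ) = r := by
  have := Nat.cast_sub h (R := ℝ); linarith

lemma P1_succ_top (a : ℝ) (s r : ℕ) (h : s ≤ r) :
    P1 a s (r + 1) = P1 a s r * (2 * (r : ℝ) + 1 + a) := by
  rw [P1, P1, show r + 1 - s = (r - s) + 1 by omega, Finset.prod_range_succ]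
  congr 2
  have := cast_sub_add s r h
  linarith

lemma P3_succ_top (a : ℝ) (s r : ℕ) (h : s ≤ r) :
    P3 a s (r + 1) = P3 a s r * (2 * (r : ℝ) + 3 + a) := by
  rw [P3, P3, show r + 1 - s = (r - s) + 1 by omega, Finset.prod_range_succ]
  congr 2
  have := cast_sub_add s r h
  linarith

lemma P1_succ_bot (a : ℝ) (s r : ℕ) (h : s ≤ r) :
    P1 a s (r + 1) = (2 * (s : ℝ) + 1 + a) * P3 a s r := by
  rw [P1, P3, show r + 1 - s = (r - s) + 1 by omega, Finset.prod_range_succ']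
  have hp : ∀ i ∈ Finset.range (r - s),
      (2 * ((s : ℝ) + ((i + 1 : ℕ) : ℝ)) + 1 + a) = (2 * ((s : ℝ) + (i : ℝ)) + 3 + a) :=
    fun i _ => by push_cast; ring
  rw [Finset.prod_congr rfl hp]
  push_cast
  ring

lemma P3_bot (a : ℝ) (s r : ℕ) (h : s < r) :
    P3 a s r = (2 * (s : ℝ) + 3 + a) * P3 a (s + 1) r := by
  rw [P3, P3, show r - s = (r - (s + 1)) + 1 by omega, Finset.prod_range_succ']
  have hp : ∀ i ∈ Finset.range (r - (s + 1)),
      (2 * ((s : ℝ) + ((i + 1 : ℕ) : ℝ)) + 3 + a) = (2 * (((s + 1 : ℕ) : ℝ)) + 2 * (i : ℝ) + 3 + a) :=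
    fun i _ => by push_cast; ring
  rw [Finset.prod_congr rfl hp]
  have hp2 : ∀ i ∈ Finset.range (r - (s + 1)),
      (2 * (((s + 1 : ℕ) : ℝ)) + 2 * (i : ℝ) + 3 + a) = (2 * (((s + 1 : ℕ) : ℝ) + (i : ℝ)) + 3 + a) :=
    fun i _ => by push_cast; ring
  rw [Finset.prod_congr rfl hp2]
  push_cast
  ring

/-- Even-index closed form. -/
noncomputable def Ep (m : ℕ) (a : ℝ) (r : ℕ) : ℝ[X] :=
  ∑ s ∈ Finset.range (r + 1), C (bet m r s * P1 a s r) * Qp a s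

/-- Odd-index closed form. -/
noncomputable def Op (m : ℕ) (a : ℝ) (r : ℕ) : ℝ[X] :=
  ∑ s ∈ Finset.range (r + 1), C (bet m r s * P3 a s r) * (X * Qp a s)

lemma Ep_zero (m : ℕ) (a : ℝ) : Ep m a 0 = 1 := by
  simp [Ep, bet_self, P1_self, Qp]

lemma Op_zero (m : ℕ) (a : ℝ) : Op m a 0 = X := by
  simp [Op, bet_self, P3_self, Qp]

/-- Recurrence (A): odd step. -/
lemma OpA (m : ℕ) (a : ℝ) (r : ℕ) (hr : r + 1 ≤ m) :
    Op m a (r + 1) = X * Ep m a (r + 1)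
      - C (4 * ((r : ℝ) + 1) * ((m : ℝ) - r)) * Op m a r := by
  rw [Op, Ep, Op, Finset.mul_sum, Finset.mul_sum]
  have hext : ∑ s ∈ Finset.range (r + 1),
      C (4 * ((r : ℝ) + 1) * ((m : ℝ) - r)) * (C (bet m r s * P3 a s r) * (X * Qp a s))
      = ∑ s ∈ Finset.range (r + 2),
      C (4 * ((r : ℝ) + 1) * ((m : ℝ) - r) * (bet m r s * P3 a s r)) * (X * Qp a s) := by
    rw [Finset.sum_range_succ (n := r + 1), bet_of_gt m r (r + 1) (by omega)]
    simp only [zero_mul, mul_zero, map_zero, add_zero]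
    apply Finset.sum_congr rfl
    intro s _
    simp only [C_mul]
    ring
  rw [hext, ← Finset.sum_sub_distrib]
  apply Finset.sum_congr rfl
  intro s hs
  rw [Finset.mem_range] at hs
  have hs' : s ≤ r + 1 := by omega
  have key : bet m (r + 1) s * P3 a s (r + 1)
      = bet m (r + 1) s * P1 a s (r + 1)
        - 4 * ((r : ℝ) + 1) * ((m : ℝ) - r) * (bet m r s * P3 a s r) := by
    rcases eq_or_lt_of_le hs' with rfl | hlt
    · rw [P3_self, P1_self, bet_of_gt m r (r + 1) (by omega)]
      ring
    · have hsr : s ≤ r := by omega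
      rw [P3_succ_top a s r hsr, P1_succ_bot a s r hsr]
      linear_combination (P3 a s r) * betA m r s hsr (by omega)
  calc C (bet m (r + 1) s * P3 a s (r + 1)) * (X * Qp a s)
      = C (bet m (r + 1) s * P1 a s (r + 1)
          - 4 * ((r : ℝ) + 1) * ((m : ℝ) - r) * (bet m r s * P3 a s r)) * (X * Qp a s) := by
        rw [key]
    _ = _ := by rw [C_sub]; ring

/-- Recurrence (B): even step. -/
lemma EpB (m : ℕ) (a : ℝ) (r : ℕ) (hr : r ≤ m) :
    Ep m a (r + 1) = X * Op m a r
      - C ((2 * (r : ℝ) + 1 + a) * (2 * (m : ℝ) + 1 - 2 * r + a)) * Ep m a r := by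
  set c : ℝ := (2 * (r : ℝ) + 1 + a) * (2 * (m : ℝ) + 1 - 2 * r + a) with hc
  have h1 : X * Op m a r
      = ∑ s ∈ Finset.range (r + 1), C (bet m r s * P3 a s r) * Qp a (s + 1)
      + ∑ s ∈ Finset.range (r + 1),
          C (bet m r s * P3 a s r * (2 * (s : ℝ) + 1 + a) ^ 2) * Qp a s := by
    rw [Op, Finset.mul_sum, ← Finset.sum_add_distrib]
    apply Finset.sum_congr rfl
    intro s _
    rw [Qp_succ]
    simp only [C_mul]
    ring
  have h2 : C c * Ep m a r
      = ∑ s ∈ Finset.range (r + 1), C (c * (bet m r s * P1 a s r)) * Qp a s := by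
    rw [Ep, Finset.mul_sum]
    apply Finset.sum_congr rfl
    intro s _
    simp only [C_mul]
    ring
  rw [h1, h2]
  have h3 : ∑ s ∈ Finset.range (r + 1),
        C (bet m r s * P3 a s r * (2 * (s : ℝ) + 1 + a) ^ 2) * Qp a s
      - ∑ s ∈ Finset.range (r + 1), C (c * (bet m r s * P1 a s r)) * Qp a s
      = ∑ s ∈ Finset.range (r + 1),
          C (bet m r (s + 1) * P3 a (s + 1) r * (2 * ((s : ℝ) + 1) + 1 + a) ^ 2
            - c * (bet m r (s + 1) * P1 a (s + 1) r)) * Qp a (s + 1)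
        + C (bet m r 0 * P3 a 0 r * (2 * (0 : ℝ) + 1 + a) ^ 2
            - c * (bet m r 0 * P1 a 0 r)) * Qp a 0 := by
    rw [← Finset.sum_sub_distrib]
    have hstep : ∀ s ∈ Finset.range (r + 2),
        (C (bet m r s * P3 a s r * (2 * (s : ℝ) + 1 + a) ^ 2) * Qp a s
          - C (c * (bet m r s * P1 a s r)) * Qp a s)
        = C (bet m r s * P3 a s r * (2 * (s : ℝ) + 1 + a) ^ 2
            - c * (bet m r s * P1 a s r)) * Qp a s := by
      intro s _
      simp only [C_sub, C_mul]
      ring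
    have hzero : C (bet m r (r + 1) * P3 a (r + 1) r * (2 * ((r + 1 : ℕ) : ℝ) + 1 + a) ^ 2)
          * Qp a (r + 1)
        - C (c * (bet m r (r + 1) * P1 a (r + 1) r)) * Qp a (r + 1) = 0 := by
      rw [bet_of_gt m r (r + 1) (by omega)]
      simp
    calc ∑ s ∈ Finset.range (r + 1),
          (C (bet m r s * P3 a s r * (2 * (s : ℝ) + 1 + a) ^ 2) * Qp a s
            - C (c * (bet m r s * P1 a s r)) * Qp a s)
        = ∑ s ∈ Finset.range (r + 2),
          (C (bet m r s * P3 a s r * (2 * (s : ℝ) + 1 + a) ^ 2) * Qp a s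
            - C (c * (bet m r s * P1 a s r)) * Qp a s) := by
          rw [Finset.sum_range_succ (n := r + 1), hzero, add_zero]
      _ = ∑ s ∈ Finset.range (r + 2),
          C (bet m r s * P3 a s r * (2 * (s : ℝ) + 1 + a) ^ 2
            - c * (bet m r s * P1 a s r)) * Qp a s := Finset.sum_congr rfl hstep
      _ = _ := by
          rw [Finset.sum_range_succ' (fun s => C (bet m r s * P3 a s r
            * (2 * (s : ℝ) + 1 + a) ^ 2 - c * (bet m r s * P1 a s r)) * Qp a s) (r + 1)]
          push_cast
          ring
  have hB0 : bet m (r + 1) 0 = -(2 * ((m : ℝ) - r)) * bet m r 0 := by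
    have h := betA m r 0 (Nat.zero_le r) hr
    push_cast at h
    have hne : (2 : ℝ) * ((r : ℝ) + 1) ≠ 0 := by positivity
    apply mul_left_cancel₀ hne
    linear_combination h
  have hRR0 : P1 a 0 r * (2 * (r : ℝ) + 1 + a) = (2 * (0 : ℝ) + 1 + a) * P3 a 0 r := by
    have e1 := P1_succ_top a 0 r (Nat.zero_le r)
    have e2 := P1_succ_bot a 0 r (Nat.zero_le r)
    rw [e1] at e2
    push_cast at e2 ⊢
    linarith
  have key0 : bet m (r + 1) 0 * P1 a 0 (r + 1)
      = bet m r 0 * P3 a 0 r * (2 * (0 : ℝ) + 1 + a) ^ 2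
        - c * (bet m r 0 * P1 a 0 r) := by
    rw [P1_succ_bot a 0 r (Nat.zero_le r), hB0, hc]
    push_cast at hRR0 ⊢
    linear_combination (bet m r 0 * (2 * (m : ℝ) + 1 - 2 * (r : ℝ) + a)) * hRR0
  have key1 : ∀ s ∈ Finset.range (r + 1),
      bet m (r + 1) (s + 1) * P1 a (s + 1) (r + 1)
        = bet m r s * P3 a s r
          + (bet m r (s + 1) * P3 a (s + 1) r * (2 * ((s : ℝ) + 1) + 1 + a) ^ 2
            - c * (bet m r (s + 1) * P1 a (s + 1) r)) := by
    intro s hs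
    rw [Finset.mem_range] at hs
    have hsr : s ≤ r := by omega
    rcases eq_or_lt_of_le hsr with rfl | hlt
    · rw [P1_self, bet_self, bet_self, P3_self, bet_of_gt m s (s + 1) (by omega)]
      ring
    · have hs1r : s + 1 ≤ r := by omega
      have hR1 := P1_succ_top a (s + 1) r hs1r
      have hR2 := P1_succ_bot a (s + 1) r hs1r
      have hR3 := P3_bot a s r hlt
      have hRR : P1 a (s + 1) r * (2 * (r : ℝ) + 1 + a)
          = (2 * ((s : ℝ) + 1) + 1 + a) * P3 a (s + 1) r := by
        rw [← hR1, hR2]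
        push_cast
        ring
      have hbB := betB m r s hsr hr
      rw [hR2, hR3, hbB, hc]
      push_cast
      linear_combination (bet m r (s + 1) * (2 * (m : ℝ) + 1 - 2 * (r : ℝ) + a)) * hRR
  have h4 : Ep m a (r + 1)
      = ∑ s ∈ Finset.range (r + 1),
          C (bet m (r + 1) (s + 1) * P1 a (s + 1) (r + 1)) * Qp a (s + 1)
        + C (bet m (r + 1) 0 * P1 a 0 (r + 1)) * Qp a 0 := by
    rw [Ep, Finset.sum_range_succ' (fun s => C (bet m (r + 1) s * P1 a s (r + 1)) * Qp a s) (r + 1)]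
  rw [h4, add_sub_assoc, h3, ← add_assoc, ← Finset.sum_add_distrib]
  congr 1
  · apply Finset.sum_congr rfl
    intro s hs
    rw [key1 s hs, C_add]
    ring
  · rw [key0]

noncomputable def uH (a : ℝ) : ℕ → ℝ[X] :=
  fun i => -C (if (i + 1) % 2 = 0 then ((i : ℝ) + 1) else ((i : ℝ) + 1) + a)

noncomputable def lH (n : ℕ) (b : ℝ) : ℕ → ℝ[X] :=
  fun j => -C (if (n - j) % 2 = 0 then ((n - j : ℕ) : ℝ) else ((n - j : ℕ) : ℝ) + b)

lemma charmatrix_Hmat (n : ℕ) (a b : ℝ) :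
    charmatrix (Hmat n a b) = triM (fun _ => (X : ℝ[X])) (uH a) (lH n b) (n + 1) := by
  refine Matrix.ext fun i j => ?_
  by_cases hij : i = j
  · subst hij
    rw [charmatrix_apply_eq]
    have e1 : ¬((i : ℕ) + 1 = (i : ℕ)) := by omega
    simp [Hmat, triM, e1]
  · rw [charmatrix_apply_ne _ _ _ hij]
    have hne : (i : ℕ) ≠ (j : ℕ) := fun h => hij (Fin.ext h)
    by_cases h1 : (i : ℕ) + 1 = (j : ℕ)
    · simp [Hmat, triM, uH, h1]
    · by_cases h2 : (j : ℕ) + 1 = (i : ℕ)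
      · simp [Hmat, triM, lH, h1, h2]
      · simp [Hmat, triM, h1, h2, hne]

lemma charpoly_eval {N : ℕ} (M : Matrix (Fin N) (Fin N) ℝ) (x : ℝ) :
    M.charpoly.eval x = (Matrix.scalar (Fin N) x - M).det := by
  rw [Matrix.charpoly]
  have h := RingHom.map_det (Polynomial.evalRingHom x) (charmatrix M)
  rw [show (Polynomial.evalRingHom x) (charmatrix M).det = (charmatrix M).det.eval x from rfl]
    at h
  rw [h]
  congr 1
  ext i j
  simp only [RingHom.mapMatrix_apply, Matrix.map_apply]
  by_cases hij : i = j
  · subst hij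
    rw [charmatrix_apply_eq]
    simp [Matrix.scalar_apply]
  · rw [charmatrix_apply_ne _ _ _ hij]
    simp [Matrix.scalar_apply, Matrix.diagonal_apply_ne _ hij, hij]

lemma mem_spectrum_iff_eval {N : ℕ} (M : Matrix (Fin N) (Fin N) ℝ) (x : ℝ) :
    x ∈ spectrum ℝ M ↔ M.charpoly.eval x = 0 := by
  rw [spectrum.mem_iff, charpoly_eval]
  have halg : (algebraMap ℝ (Matrix (Fin N) (Fin N) ℝ)) x = Matrix.scalar (Fin N) x := by
    simp [Matrix.algebraMap_eq_diagonal, Matrix.scalar_apply]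
  rw [halg, Matrix.isUnit_iff_isUnit_det, isUnit_iff_ne_zero, not_not]

lemma uH_lH_even (m r : ℕ) (a : ℝ) (hr : r ≤ m) :
    uH a (2 * r) * lH (2 * m + 1) a (2 * r)
      = C ((2 * (r : ℝ) + 1 + a) * (2 * (m : ℝ) + 1 - 2 * (r : ℝ) + a)) := by
  rw [uH, lH, if_neg (by omega), if_neg (by omega), neg_mul_neg, ← C_mul]
  congr 1
  have hc : ((2 * m + 1 - 2 * r : ℕ) : ℝ) = 2 * (m : ℝ) + 1 - 2 * (r : ℝ) := by
    rw [Nat.cast_sub (by omega)]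
    push_cast
    ring
  rw [hc]
  push_cast
  ring

lemma uH_lH_odd (m r : ℕ) (a : ℝ) (hr : r ≤ m) :
    uH a (2 * r + 1) * lH (2 * m + 1) a (2 * r + 1)
      = C (4 * ((r : ℝ) + 1) * ((m : ℝ) - (r : ℝ))) := by
  rw [uH, lH, if_pos (by omega), if_pos (by omega), neg_mul_neg, ← C_mul]
  congr 1
  have hc : ((2 * m + 1 - (2 * r + 1) : ℕ) : ℝ) = 2 * (m : ℝ) - 2 * (r : ℝ) := by
    rw [Nat.cast_sub (by omega)]
    push_cast
    ring
  rw [hc]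
  push_cast
  ring

lemma minors (m : ℕ) (a : ℝ) : ∀ r, r ≤ m →
    (triM (fun _ => (X : ℝ[X])) (uH a) (lH (2 * m + 1) a) (2 * r)).det = Ep m a r ∧
    (triM (fun _ => (X : ℝ[X])) (uH a) (lH (2 * m + 1) a) (2 * r + 1)).det = Op m a r := by
  intro r
  induction r with
  | zero =>
    intro _
    constructor
    · rw [show 2 * 0 = 0 from rfl, Matrix.det_fin_zero, Ep_zero]
    · rw [show 2 * 0 + 1 = 1 from rfl, Matrix.det_fin_one, Op_zero]
      simp [triM]
  | succ r ih =>
    intro hr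
    obtain ⟨hE, hO⟩ := ih (by omega)
    have hE' : (triM (fun _ => (X : ℝ[X])) (uH a) (lH (2 * m + 1) a) (2 * (r + 1))).det
        = Ep m a (r + 1) := by
      rw [show 2 * (r + 1) = 2 * r + 2 by ring]
      rw [triM_det_succ_succ, hE, hO, uH_lH_even m r a (by omega)]
      rw [EpB m a r (by omega)]
    refine ⟨hE', ?_⟩
    rw [show 2 * (r + 1) + 1 = (2 * r + 1) + 2 by ring]
    rw [triM_det_succ_succ, show (2 * r + 1) + 1 = 2 * (r + 1) by ring, hE', hO,
      uH_lH_odd m r a (by omega)]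
    rw [OpA m a r (by omega)]

lemma Ep_top (m : ℕ) (a : ℝ) : Ep m a (m + 1) = Qp a (m + 1) := by
  rw [Ep, Finset.sum_range_succ, bet_self, P1_self, one_mul, C_1, one_mul]
  rw [Finset.sum_eq_zero, zero_add]
  intro s hs
  rw [Finset.mem_range] at hs
  rw [bet_top_zero m s (by omega), zero_mul, C_0, zero_mul]

lemma Hmat_charpoly (m : ℕ) (a : ℝ) :
    (Hmat (2 * m + 1) a a).charpoly
      = ∏ k ∈ Finset.range (m + 1), (X ^ 2 - C ((2 * (k : ℝ) + 1 + a) ^ 2)) := by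
  obtain ⟨hE, hO⟩ := minors m a m le_rfl
  rw [Matrix.charpoly, charmatrix_Hmat]
  rw [show 2 * m + 1 + 1 = 2 * m + 2 from rfl]
  rw [triM_det_succ_succ, show 2 * m + 1 = 2 * m + 1 from rfl, hE, hO,
    uH_lH_even m m a le_rfl]
  rw [← EpB m a m le_rfl, Ep_top, Qp]

/-- for `n = 2m+1` odd and any real `a`, the eigenvalues of `H_n(a,a)`
are `±(2k+1+a)` for `k = 0, ..., m`; equivalently its characteristic polynomial is
`∏_{k=0}^m (λ² - (2k+1+a)²)`. -/
theorem Hmat_odd_a_a (m : ℕ) (a : ℝ) :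
    (Hmat (2 * m + 1) a a).charpoly
        = ∏ k ∈ Finset.range (m + 1), (X ^ 2 - C ((2 * (k : ℝ) + 1 + a) ^ 2)) ∧
      spectrum ℝ (Hmat (2 * m + 1) a a)
        = {x : ℝ | ∃ k ∈ Finset.range (m + 1),
            x = 2 * (k : ℝ) + 1 + a ∨ x = -(2 * (k : ℝ) + 1 + a)} := by
  refine ⟨Hmat_charpoly m a, ?_⟩
  ext x
  rw [Set.mem_setOf_eq, mem_spectrum_iff_eval, Hmat_charpoly m a]
  rw [Polynomial.eval_prod, Finset.prod_eq_zero_iff]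
  constructor
  · rintro ⟨k, hk, hev⟩
    refine ⟨k, hk, ?_⟩
    simp only [Polynomial.eval_sub, Polynomial.eval_pow, Polynomial.eval_X,
      Polynomial.eval_C] at hev
    have h2 : x ^ 2 = (2 * (k : ℝ) + 1 + a) ^ 2 := by linarith [sub_eq_zero.mp hev]
    rcases sq_eq_sq_iff_eq_or_eq_neg.mp h2 with h | h
    · exact Or.inl h
    · exact Or.inr h
  · rintro ⟨k, hk, hx⟩
    refine ⟨k, hk, ?_⟩
    simp only [Polynomial.eval_sub, Polynomial.eval_pow, Polynomial.eval_X,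
      Polynomial.eval_C]
    rcases hx with h | h <;> rw [h] <;> ring
end

section
/- For n = 2m+1 odd and a = -(m+1), every eigenvalue of H_n(a,a) is a double eigenvalue: the characteristic polynomial equals ∏_{k=0}^{m} (λ - (2k - m))², so each of the values 2k - m for k = 0,...,m is an eigenvalue of algebraic multiplicity 2. -/
open Polynomial

namespace SylKac

open Matrix

/-! Shift matrices and multiplication by them. -/

/-- superdiagonal shift matrix with entries `u i` at `(i, i+1)`. -/
def upM {n : ℕ} (u : Fin n → ℝ) : Matrix (Fin n) (Fin n) ℝ :=
  Matrix.of fun i j => if (j : ℕ) = (i : ℕ) + 1 then u i else 0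

/-- subdiagonal shift matrix with entries `w j` at `(j+1, j)`. -/
def dnM {n : ℕ} (w : Fin n → ℝ) : Matrix (Fin n) (Fin n) ℝ :=
  Matrix.of fun i j => if (i : ℕ) = (j : ℕ) + 1 then w j else 0

lemma upM_mul {n : ℕ} (u : Fin n → ℝ) (A : Matrix (Fin n) (Fin n) ℝ) (i j : Fin n) :
    (upM u * A) i j = if h : (i : ℕ) + 1 < n then u i * A ⟨(i : ℕ) + 1, h⟩ j else 0 := by
  rw [Matrix.mul_apply]
  by_cases h : (i : ℕ) + 1 < n
  · rw [dif_pos h, Finset.sum_eq_single (⟨(i : ℕ) + 1, h⟩ : Fin n)]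
    · simp [upM]
    · intro k _ hk
      have hk' : (k : ℕ) ≠ (i : ℕ) + 1 := fun hc => hk (Fin.ext hc)
      simp [upM, hk']
    · intro hmem; exact absurd (Finset.mem_univ _) hmem
  · rw [dif_neg h]
    apply Finset.sum_eq_zero
    intro k _
    have hk' : (k : ℕ) ≠ (i : ℕ) + 1 := by have := k.isLt; omega
    simp [upM, hk']

lemma dnM_mul {n : ℕ} (w : Fin n → ℝ) (A : Matrix (Fin n) (Fin n) ℝ) (i j : Fin n) :
    (dnM w * A) i j =
      if 0 < (i : ℕ) then
        w ⟨(i : ℕ) - 1, lt_of_le_of_lt (Nat.sub_le _ _) i.isLt⟩ *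
          A ⟨(i : ℕ) - 1, lt_of_le_of_lt (Nat.sub_le _ _) i.isLt⟩ j
      else 0 := by
  rw [Matrix.mul_apply]
  by_cases h : 0 < (i : ℕ)
  · rw [if_pos h, Finset.sum_eq_single (⟨(i : ℕ) - 1, lt_of_le_of_lt (Nat.sub_le _ _) i.isLt⟩ : Fin n)]
    · simp [dnM, Nat.sub_add_cancel h]
    · intro k _ hk
      have hk' : (i : ℕ) ≠ (k : ℕ) + 1 := by
        intro hc
        exact hk (Fin.ext (show (k : ℕ) = (i : ℕ) - 1 by omega))
      simp [dnM, hk']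
    · intro hmem; exact absurd (Finset.mem_univ _) hmem
  · rw [if_neg h]
    apply Finset.sum_eq_zero
    intro k _
    have hk' : (i : ℕ) ≠ (k : ℕ) + 1 := by omega
    simp [dnM, hk']

lemma mul_dnM {n : ℕ} (w : Fin n → ℝ) (A : Matrix (Fin n) (Fin n) ℝ) (i j : Fin n) :
    (A * dnM w) i j = if h : (j : ℕ) + 1 < n then A i ⟨(j : ℕ) + 1, h⟩ * w j else 0 := by
  rw [Matrix.mul_apply]
  by_cases h : (j : ℕ) + 1 < n
  · rw [dif_pos h, Finset.sum_eq_single (⟨(j : ℕ) + 1, h⟩ : Fin n)]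
    · simp [dnM]
    · intro k _ hk
      have hk' : (k : ℕ) ≠ (j : ℕ) + 1 := fun hc => hk (Fin.ext hc)
      simp [dnM, hk']
    · intro hmem; exact absurd (Finset.mem_univ _) hmem
  · rw [dif_neg h]
    apply Finset.sum_eq_zero
    intro k _
    have hk' : (k : ℕ) ≠ (j : ℕ) + 1 := by have := k.isLt; omega
    simp [dnM, hk']

/-! The block matrices. -/

variable (m : ℕ)

/-- the even-to-odd block (lower bidiagonal). -/
noncomputable def MM : Matrix (Fin (m + 1)) (Fin (m + 1)) ℝ :=
  Matrix.diagonal (fun j : Fin (m + 1) => 2 * ((j : ℕ) : ℝ) - m) +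
    dnM (fun j : Fin (m + 1) => 2 * ((m : ℝ) - ((j : ℕ) : ℝ)))

/-- the odd-to-even block (upper bidiagonal). -/
noncomputable def NN : Matrix (Fin (m + 1)) (Fin (m + 1)) ℝ :=
  Matrix.diagonal (fun i : Fin (m + 1) => (m : ℝ) - 2 * ((i : ℕ) : ℝ)) +
    upM (fun i : Fin (m + 1) => 2 * ((i : ℕ) : ℝ) + 2)

/-- signed Pascal matrix (upper triangular, involution). -/
noncomputable def SS : Matrix (Fin (m + 1)) (Fin (m + 1)) ℝ :=
  Matrix.of fun i j => (-1 : ℝ) ^ (i : ℕ) * ((j : ℕ).choose (i : ℕ) : ℝ)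

/-- the lower-bidiagonal companion of `MM` after conjugation by `SS`. -/
noncomputable def T₁ : Matrix (Fin (m + 1)) (Fin (m + 1)) ℝ :=
  Matrix.diagonal (fun j : Fin (m + 1) => (m : ℝ) - 2 * ((j : ℕ) : ℝ)) +
    dnM (fun j : Fin (m + 1) => 2 * ((j : ℕ) : ℝ) - 2 * m)

/-- lower triangular matrix similar to `NN * MM`. -/
noncomputable def TT : Matrix (Fin (m + 1)) (Fin (m + 1)) ℝ :=
  Matrix.diagonal (fun j : Fin (m + 1) => ((m : ℝ) - 2 * ((j : ℕ) : ℝ)) ^ 2) +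
    dnM (fun j : Fin (m + 1) =>
      ((m : ℝ) - 2 * (((j : ℕ) : ℝ) + 1)) * (2 * ((j : ℕ) : ℝ) - 2 * m))

lemma NS : NN m * SS m =
    SS m * Matrix.diagonal (fun j : Fin (m + 1) => (m : ℝ) - 2 * ((j : ℕ) : ℝ)) := by
  unfold NN
  rw [add_mul]
  ext i j
  rw [Matrix.add_apply, Matrix.diagonal_mul, upM_mul, Matrix.mul_diagonal]
  simp only [SS, Matrix.of_apply]
  by_cases h : (i : ℕ) + 1 < m + 1
  · rw [dif_pos h]
    by_cases hij : (i : ℕ) ≤ (j : ℕ)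
    · have hch := Nat.choose_succ_right_eq (j : ℕ) (i : ℕ)
      have hch' : (((j : ℕ).choose ((i : ℕ) + 1)) : ℝ) * (((i : ℕ) : ℝ) + 1) =
          (((j : ℕ).choose (i : ℕ)) : ℝ) * (((j : ℕ) : ℝ) - ((i : ℕ) : ℝ)) := by
        have := congrArg (fun t : ℕ => (t : ℝ)) hch
        push_cast at this
        rw [Nat.cast_sub hij] at this
        push_cast at this
        linarith [this]
      rw [pow_succ]
      push_cast
      linear_combination ((-1 : ℝ) ^ (i : ℕ) * (-2)) * hch'
    · push_neg at hij
      rw [Nat.choose_eq_zero_of_lt hij, Nat.choose_eq_zero_of_lt (by omega)]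
      push_cast
      ring
  · rw [dif_neg h]
    have him : (i : ℕ) = m := by have := i.isLt; omega
    by_cases hj : (j : ℕ) = (i : ℕ)
    · have : ((j : ℕ) : ℝ) = ((i : ℕ) : ℝ) := by exact_mod_cast hj
      rw [this]; ring
    · have hjm : (j : ℕ) < (i : ℕ) := by have := j.isLt; omega
      rw [Nat.choose_eq_zero_of_lt hjm]
      push_cast
      ring

lemma MS : MM m * SS m = SS m * T₁ m := by
  unfold MM T₁
  rw [add_mul, mul_add]
  ext i j
  rw [Matrix.add_apply, Matrix.add_apply, Matrix.diagonal_mul, dnM_mul, Matrix.mul_diagonal,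
    mul_dnM]
  simp only [SS, Matrix.of_apply, Fin.val_mk]
  have hjm : (j : ℕ) ≤ m := by have := j.isLt; omega
  by_cases h : 0 < (i : ℕ)
  · rw [if_pos h]
    obtain ⟨k, hk⟩ : ∃ k, (i : ℕ) = k + 1 := ⟨(i : ℕ) - 1, by omega⟩
    rw [hk]
    simp only [Nat.add_sub_cancel]
    -- Pascal: C(j+1, k+1) = C(j,k) + C(j,k+1)
    have hpas : (((j : ℕ) + 1).choose (k + 1) : ℝ) =
        ((j : ℕ).choose k : ℝ) + ((j : ℕ).choose (k + 1) : ℝ) := by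
      rw [Nat.choose_succ_succ]
      push_cast
      ring
    by_cases hkj : k ≤ (j : ℕ)
    · have hch := Nat.choose_succ_right_eq (j : ℕ) k
      have hch' : (((j : ℕ).choose (k + 1)) : ℝ) * ((k : ℝ) + 1) =
          (((j : ℕ).choose k) : ℝ) * (((j : ℕ) : ℝ) - (k : ℝ)) := by
        have := congrArg (fun t : ℕ => (t : ℝ)) hch
        push_cast at this
        rw [Nat.cast_sub hkj] at this
        push_cast at this
        linarith [this]
      by_cases hj : (j : ℕ) + 1 < m + 1
      · rw [dif_pos hj]
        rw [pow_succ]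
        push_cast
        linear_combination ((-1 : ℝ) ^ k * (-2)) * hch' +
          ((-1 : ℝ) ^ k * (2 * ((j : ℕ) : ℝ) - 2 * (m : ℝ))) * hpas
      · rw [dif_neg hj]
        have hjm' : (j : ℕ) = m := by omega
        have hcast : ((j : ℕ) : ℝ) = (m : ℝ) := by exact_mod_cast hjm'
        rw [pow_succ]
        push_cast
        rw [hcast] at hch' ⊢
        linear_combination ((-1 : ℝ) ^ k * (-2)) * hch'
    · push_neg at hkj
      rw [Nat.choose_eq_zero_of_lt hkj, Nat.choose_eq_zero_of_lt (by omega)]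
      by_cases hj : (j : ℕ) + 1 < m + 1
      · rw [dif_pos hj]
        rw [Nat.choose_eq_zero_of_lt (by omega)]
        push_cast
        ring
      · rw [dif_neg hj]
        push_cast
        ring
  · rw [if_neg h]
    have hi0 : (i : ℕ) = 0 := by omega
    rw [hi0]
    simp only [pow_zero, Nat.choose_zero_right, Nat.cast_one]
    by_cases hj : (j : ℕ) + 1 < m + 1
    · rw [dif_pos hj]
      push_cast
      ring
    · rw [dif_neg hj]
      have hjm' : (j : ℕ) = m := by omega
      have : ((j : ℕ) : ℝ) = (m : ℝ) := by exact_mod_cast hjm'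
      rw [this]
      ring

lemma DT : Matrix.diagonal (fun j : Fin (m + 1) => (m : ℝ) - 2 * ((j : ℕ) : ℝ)) * T₁ m = TT m := by
  unfold T₁ TT
  rw [Matrix.mul_add]
  ext i j
  rw [Matrix.add_apply, Matrix.add_apply, Matrix.diagonal_mul_diagonal, Matrix.diagonal_mul]
  by_cases hij : i = j
  · subst hij
    rw [Matrix.diagonal_apply_eq, Matrix.diagonal_apply_eq]
    simp only [dnM, Matrix.of_apply]
    rw [if_neg (by omega), if_neg (by omega)]
    ring
  · rw [Matrix.diagonal_apply_ne _ hij, Matrix.diagonal_apply_ne _ hij]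
    simp only [dnM, Matrix.of_apply]
    by_cases h2 : (i : ℕ) = (j : ℕ) + 1
    · rw [if_pos h2, if_pos h2]
      have hcast : ((i : ℕ) : ℝ) = ((j : ℕ) : ℝ) + 1 := by exact_mod_cast h2
      rw [hcast]
    · rw [if_neg h2, if_neg h2]
      ring

lemma NMS : (NN m * MM m) * SS m = SS m * TT m := by
  rw [mul_assoc, MS, ← mul_assoc, NS, mul_assoc, DT]

/-! Triangularity and determinants. -/

lemma SS_det_ne_zero : (SS m).det ≠ 0 := by
  have htri : (SS m).BlockTriangular id := by
    intro i j hij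
    have : (j : ℕ) < (i : ℕ) := hij
    simp [SS, Nat.choose_eq_zero_of_lt this]
  rw [Matrix.det_of_upperTriangular htri]
  apply Finset.prod_ne_zero_iff.mpr
  intro i _
  simp [SS, Nat.choose_self]

lemma det_scalar_sub (y : ℝ[X]) :
    (Matrix.scalar (Fin (m + 1)) y - (NN m * MM m).map Polynomial.C).det =
      ∏ j : Fin (m + 1), (y - C (((m : ℝ) - 2 * ((j : ℕ) : ℝ)) ^ 2)) := by
  set S' : Matrix (Fin (m + 1)) (Fin (m + 1)) ℝ[X] := (SS m).map Polynomial.C with hS'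
  have hcommS : Matrix.scalar (Fin (m + 1)) y * S' = S' * Matrix.scalar (Fin (m + 1)) y :=
    (Matrix.scalar_commute y (fun r' => Commute.all y r') S').eq
  have hconj : (Matrix.scalar (Fin (m + 1)) y - (NN m * MM m).map Polynomial.C) * S' =
      S' * (Matrix.scalar (Fin (m + 1)) y - (TT m).map Polynomial.C) := by
    rw [sub_mul, mul_sub, hcommS]
    congr 1
    rw [← Matrix.map_mul, NMS, Matrix.map_mul]
  have hdet := congrArg Matrix.det hconj
  rw [Matrix.det_mul, Matrix.det_mul] at hdet
  have hS'det : S'.det ≠ 0 := by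
    rw [hS', ← RingHom.mapMatrix_apply, ← RingHom.map_det]
    simpa using SS_det_ne_zero m
  have hmain : (Matrix.scalar (Fin (m + 1)) y - (NN m * MM m).map Polynomial.C).det =
      (Matrix.scalar (Fin (m + 1)) y - (TT m).map Polynomial.C).det := by
    have := hdet
    rw [mul_comm] at this
    exact mul_left_cancel₀ hS'det this
  rw [hmain]
  have htri : (Matrix.scalar (Fin (m + 1)) y - (TT m).map Polynomial.C).BlockTriangular
      OrderDual.toDual := by
    intro i j hij
    have hij' : (i : ℕ) < (j : ℕ) := hij
    have h1 : Matrix.scalar (Fin (m + 1)) y i j = 0 := by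
      rw [Matrix.scalar_apply, Matrix.diagonal_apply_ne _ (Fin.ne_of_val_ne (by omega))]
    have h2 : TT m i j = 0 := by
      simp only [TT, Matrix.add_apply, dnM, Matrix.of_apply]
      rw [Matrix.diagonal_apply_ne _ (Fin.ne_of_val_ne (by omega)), if_neg (by omega)]
      ring
    rw [Matrix.sub_apply, h1, Matrix.map_apply, h2, map_zero, sub_zero]
  rw [Matrix.det_of_lowerTriangular _ htri]
  apply Finset.prod_congr rfl
  intro i _
  rw [Matrix.sub_apply, Matrix.scalar_apply, Matrix.diagonal_apply_eq, Matrix.map_apply]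
  congr 1
  simp only [TT, Matrix.add_apply, dnM, Matrix.of_apply, Matrix.diagonal_apply_eq]
  rw [if_neg (by omega)]
  ring

/-! The interleaving equivalence and block decomposition of `Hmat`. -/

def eqv : (Fin (m + 1) ⊕ Fin (m + 1)) ≃ Fin (2 * m + 1 + 1) where
  toFun x := Sum.elim
    (fun i : Fin (m + 1) => (⟨2 * (i : ℕ), by have := i.isLt; omega⟩ : Fin (2 * m + 1 + 1)))
    (fun i : Fin (m + 1) => (⟨2 * (i : ℕ) + 1, by have := i.isLt; omega⟩ : Fin (2 * m + 1 + 1))) x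
  invFun k := if (k : ℕ) % 2 = 0 then Sum.inl ⟨(k : ℕ) / 2, by have := k.isLt; omega⟩
    else Sum.inr ⟨(k : ℕ) / 2, by have := k.isLt; omega⟩
  left_inv := by
    rintro (i | i)
    · show (if (2 * (i : ℕ)) % 2 = 0 then _ else _) = _
      rw [if_pos (by omega)]
      exact congrArg Sum.inl (Fin.ext (show 2 * (i : ℕ) / 2 = (i : ℕ) by omega))
    · show (if (2 * (i : ℕ) + 1) % 2 = 0 then _ else _) = _
      rw [if_neg (by omega)]
      exact congrArg Sum.inr (Fin.ext (show (2 * (i : ℕ) + 1) / 2 = (i : ℕ) by omega))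
  right_inv := by
    intro k
    by_cases h : (k : ℕ) % 2 = 0
    · show Sum.elim _ _ (if (k : ℕ) % 2 = 0 then _ else _) = k
      rw [if_pos h]
      exact Fin.ext (show 2 * ((k : ℕ) / 2) = (k : ℕ) by omega)
    · show Sum.elim _ _ (if (k : ℕ) % 2 = 0 then _ else _) = k
      rw [if_neg h]
      exact Fin.ext (show 2 * ((k : ℕ) / 2) + 1 = (k : ℕ) by omega)

lemma blocks :
    (Hmat (2 * m + 1) (-((m : ℝ) + 1)) (-((m : ℝ) + 1))).submatrix (eqv m) (eqv m) =
      Matrix.fromBlocks 0 (MM m) (NN m) 0 := by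
  ext x y
  rcases x with i | i <;> rcases y with j | j <;>
    simp only [Matrix.submatrix_apply, eqv, Equiv.coe_fn_mk, Sum.elim_inl, Sum.elim_inr,
      Matrix.fromBlocks_apply₁₁, Matrix.fromBlocks_apply₁₂, Matrix.fromBlocks_apply₂₁,
      Matrix.fromBlocks_apply₂₂, Hmat, Matrix.of_apply, Fin.val_mk, Matrix.zero_apply]
  · -- even, even : zero
    rw [if_neg (by omega), if_neg (by omega)]
  · -- even row 2i, odd column 2j+1 : MM i j
    have hi := i.isLt; have hj := j.isLt
    by_cases h1 : (i : ℕ) = (j : ℕ)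
    · have hij : i = j := Fin.ext h1
      subst hij
      rw [if_pos (by omega), if_neg (by omega)]
      simp only [MM, Matrix.add_apply, Matrix.diagonal_apply_eq, dnM, Matrix.of_apply]
      rw [if_neg (by omega)]
      push_cast
      ring
    · by_cases h2 : (i : ℕ) = (j : ℕ) + 1
      · rw [if_neg (by omega), if_pos (by omega), if_pos (by omega)]
        simp only [MM, Matrix.add_apply, dnM, Matrix.of_apply]
        rw [Matrix.diagonal_apply_ne _ (Fin.ne_of_val_ne (by omega)), if_pos h2]
        rw [Nat.cast_sub (by omega)]
        push_cast
        ring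
      · rw [if_neg (by omega), if_neg (by omega)]
        simp only [MM, Matrix.add_apply, dnM, Matrix.of_apply]
        rw [Matrix.diagonal_apply_ne _ (Fin.ne_of_val_ne (by omega)), if_neg h2]
        ring
  · -- odd row 2i+1, even column 2j : NN i j
    have hi := i.isLt; have hj := j.isLt
    by_cases h1 : (j : ℕ) = (i : ℕ) + 1
    · rw [if_pos (by omega), if_pos (by omega)]
      simp only [NN, Matrix.add_apply, upM, Matrix.of_apply]
      rw [Matrix.diagonal_apply_ne _ (Fin.ne_of_val_ne (by omega)), if_pos h1]
      push_cast
      ring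
    · by_cases h2 : (i : ℕ) = (j : ℕ)
      · have hij : i = j := Fin.ext h2
        subst hij
        rw [if_neg (by omega), if_pos (by omega), if_neg (by omega)]
        simp only [NN, Matrix.add_apply, Matrix.diagonal_apply_eq, upM, Matrix.of_apply]
        rw [if_neg (by omega), Nat.cast_sub (by omega)]
        push_cast
        ring
      · rw [if_neg (by omega), if_neg (by omega)]
        simp only [NN, Matrix.add_apply, upM, Matrix.of_apply]
        rw [Matrix.diagonal_apply_ne _ (Fin.ne_of_val_ne (by omega)), if_neg h1]
        ring
  · -- odd, odd : zero
    rw [if_neg (by omega), if_neg (by omega)]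

end SylKac

namespace SylKac

variable (m : ℕ)

lemma charmatrix_zero' : Matrix.charmatrix (0 : Matrix (Fin (m + 1)) (Fin (m + 1)) ℝ) =
    Matrix.scalar (Fin (m + 1)) (X : ℝ[X]) := by
  unfold Matrix.charmatrix
  rw [map_zero, sub_zero]

lemma det_scalarY (y : ℝ[X]) : (Matrix.scalar (Fin (m + 1)) y).det = y ^ (m + 1) := by
  rw [Matrix.scalar_apply, Matrix.det_diagonal, Finset.prod_const, Finset.card_univ,
    Fintype.card_fin]

lemma block_char : (Matrix.fromBlocks 0 (MM m) (NN m) 0).charpoly =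
    ∏ j : Fin (m + 1),
      ((X - C ((m : ℝ) - 2 * ((j : ℕ) : ℝ))) * (X + C ((m : ℝ) - 2 * ((j : ℕ) : ℝ)))) := by
  classical
  set MC : Matrix (Fin (m + 1)) (Fin (m + 1)) ℝ[X] := (MM m).map Polynomial.C with hMC
  set NC : Matrix (Fin (m + 1)) (Fin (m + 1)) ℝ[X] := (NN m).map Polynomial.C with hNC
  set 𝕏 : Matrix (Fin (m + 1)) (Fin (m + 1)) ℝ[X] := Matrix.scalar (Fin (m + 1)) (X : ℝ[X])
    with hX
  have hcm : Matrix.charmatrix (Matrix.fromBlocks 0 (MM m) (NN m) 0) =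
      Matrix.fromBlocks 𝕏 (-MC) (-NC) 𝕏 := by
    rw [Matrix.charmatrix_fromBlocks, charmatrix_zero']
  have hcommM : 𝕏 * MC = MC * 𝕏 :=
    (Matrix.scalar_commute (X : ℝ[X]) (fun r' => Commute.all _ r') MC).eq
  have hmul : Matrix.fromBlocks 𝕏 (-MC) (-NC) 𝕏 * Matrix.fromBlocks 𝕏 MC 0 𝕏 =
      Matrix.fromBlocks (𝕏 * 𝕏) 0 (-NC * 𝕏) (𝕏 * 𝕏 - NC * MC) := by
    have hA : 𝕏 * 𝕏 + (-MC) * 0 = 𝕏 * 𝕏 := by rw [mul_zero, add_zero]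
    have hB : 𝕏 * MC + (-MC) * 𝕏 = (0 : Matrix (Fin (m + 1)) (Fin (m + 1)) ℝ[X]) := by
      rw [hcommM, neg_mul]
      exact add_neg_cancel _
    have hC : (-NC) * 𝕏 + 𝕏 * 0 = -NC * 𝕏 := by rw [mul_zero, add_zero]
    have hD : (-NC) * MC + 𝕏 * 𝕏 = 𝕏 * 𝕏 - NC * MC := by
      rw [neg_mul, neg_add_eq_sub]
    rw [Matrix.fromBlocks_multiply, hA, hB, hC, hD]
  have hXX : 𝕏 * 𝕏 = Matrix.scalar (Fin (m + 1)) ((X : ℝ[X]) ^ 2) := by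
    rw [hX, ← map_mul, sq]
  have hNCMC : NC * MC = (NN m * MM m).map Polynomial.C := by
    rw [hNC, hMC, Matrix.map_mul]
  have hdet := congrArg Matrix.det hmul
  rw [Matrix.det_mul, ← hcm, Matrix.det_fromBlocks_zero₂₁, Matrix.det_fromBlocks_zero₁₂,
    hXX, hNCMC, det_scalarY, det_scalarY, det_scalar_sub] at hdet
  have hXne : ((X : ℝ[X]) ^ (2 * (m + 1))) ≠ 0 := pow_ne_zero _ Polynomial.X_ne_zero
  have hfinal : (Matrix.fromBlocks 0 (MM m) (NN m) 0).charpoly =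
      ∏ j : Fin (m + 1), ((X : ℝ[X]) ^ 2 - C (((m : ℝ) - 2 * ((j : ℕ) : ℝ)) ^ 2)) := by
    apply mul_left_cancel₀ hXne
    calc ((X : ℝ[X]) ^ (2 * (m + 1))) * (Matrix.fromBlocks 0 (MM m) (NN m) 0).charpoly
        = (Matrix.charmatrix (Matrix.fromBlocks 0 (MM m) (NN m) 0)).det *
            ((X : ℝ[X]) ^ (m + 1) * (X : ℝ[X]) ^ (m + 1)) := by
          rw [show (Matrix.charmatrix (Matrix.fromBlocks 0 (MM m) (NN m) 0)).det =
            (Matrix.fromBlocks 0 (MM m) (NN m) 0).charpoly from rfl, ← pow_add]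
          ring
      _ = ((X : ℝ[X]) ^ 2) ^ (m + 1) * ∏ j : Fin (m + 1),
            ((X : ℝ[X]) ^ 2 - C (((m : ℝ) - 2 * ((j : ℕ) : ℝ)) ^ 2)) := hdet
      _ = ((X : ℝ[X]) ^ (2 * (m + 1))) * ∏ j : Fin (m + 1),
            ((X : ℝ[X]) ^ 2 - C (((m : ℝ) - 2 * ((j : ℕ) : ℝ)) ^ 2)) := by
          rw [← pow_mul]
  rw [hfinal]
  apply Finset.prod_congr rfl
  intro j _
  have : ((X : ℝ[X]) - C ((m : ℝ) - 2 * ((j : ℕ) : ℝ))) *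
      ((X : ℝ[X]) + C ((m : ℝ) - 2 * ((j : ℕ) : ℝ))) =
      (X : ℝ[X]) ^ 2 - (C ((m : ℝ) - 2 * ((j : ℕ) : ℝ))) ^ 2 := by ring
  rw [this, ← map_pow]

/-- the characteristic polynomial of the matrix in question. -/
lemma main_charpoly :
    (Hmat (2 * m + 1) (-((m : ℝ) + 1)) (-((m : ℝ) + 1))).charpoly
      = ∏ k ∈ Finset.range (m + 1), (X - C (2 * (k : ℝ) - (m : ℝ))) ^ 2 := by
  classical
  have h1 : Hmat (2 * m + 1) (-((m : ℝ) + 1)) (-((m : ℝ) + 1)) =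
      Matrix.reindex (eqv m) (eqv m) (Matrix.fromBlocks 0 (MM m) (NN m) 0) := by
    rw [← blocks m]
    ext p q
    simp [Matrix.reindex_apply, Matrix.submatrix_apply]
  rw [h1, Matrix.charpoly_reindex, block_char]
  rw [Finset.prod_mul_distrib]
  have hsecond : (∏ j : Fin (m + 1), ((X : ℝ[X]) + C ((m : ℝ) - 2 * ((j : ℕ) : ℝ)))) =
      ∏ k ∈ Finset.range (m + 1), ((X : ℝ[X]) - C (2 * (k : ℝ) - (m : ℝ))) := by
    rw [Fin.prod_univ_eq_prod_range (fun k => ((X : ℝ[X]) + C ((m : ℝ) - 2 * (k : ℝ))))]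
    apply Finset.prod_congr rfl
    intro k _
    have he : (2 * (k : ℝ) - (m : ℝ)) = -((m : ℝ) - 2 * (k : ℝ)) := by ring
    rw [he, map_neg, sub_neg_eq_add]
  have hfirst : (∏ j : Fin (m + 1), ((X : ℝ[X]) - C ((m : ℝ) - 2 * ((j : ℕ) : ℝ)))) =
      ∏ k ∈ Finset.range (m + 1), ((X : ℝ[X]) - C (2 * (k : ℝ) - (m : ℝ))) := by
    rw [Fin.prod_univ_eq_prod_range (fun k => ((X : ℝ[X]) - C ((m : ℝ) - 2 * (k : ℝ))))]
    rw [← Finset.prod_range_reflect (fun k => ((X : ℝ[X]) - C (2 * (k : ℝ) - (m : ℝ)))) (m + 1)]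
    apply Finset.prod_congr rfl
    intro k hk
    have hkm : k ≤ m := by
      have := Finset.mem_range.mp hk; omega
    have he : (m + 1 - 1 - k) = m - k := by omega
    rw [he, Nat.cast_sub hkm]
    congr 1
    congr 1
    ring
  rw [hsecond, hfirst]
  rw [← sq]
  rw [← Finset.prod_pow]

end SylKac

/-- for `n = 2m+1` odd and `a = -(m+1)`, every eigenvalue of
`H_n(a,a)` is a double eigenvalue: the characteristic polynomial equals
`∏_{k=0}^m (λ - (2k - m))²`, so each value `2k - m` (`k = 0, ..., m`) is an
eigenvalue of algebraic multiplicity 2. -/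
theorem Hmat_odd_double_eigenvalues (m : ℕ) :
    (Hmat (2 * m + 1) (-((m : ℝ) + 1)) (-((m : ℝ) + 1))).charpoly
        = ∏ k ∈ Finset.range (m + 1), (X - C (2 * (k : ℝ) - (m : ℝ))) ^ 2 ∧
      ∀ k ∈ Finset.range (m + 1),
        (Hmat (2 * m + 1) (-((m : ℝ) + 1)) (-((m : ℝ) + 1))).charpoly.rootMultiplicity
          (2 * (k : ℝ) - (m : ℝ)) = 2 := by
  classical
  have hmain := SylKac.main_charpoly m
  refine ⟨hmain, ?_⟩
  intro k hk
  rw [hmain]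
  set f : ℕ → ℝ[X] := fun k => ((X : ℝ[X]) - C (2 * (k : ℝ) - (m : ℝ))) ^ 2 with hf
  have hsplit : ∏ j ∈ Finset.range (m + 1), f j =
      f k * ∏ j ∈ (Finset.range (m + 1)).erase k, f j :=
    (Finset.mul_prod_erase _ f hk).symm
  have hQne : (∏ j ∈ (Finset.range (m + 1)).erase k, f j) ≠ 0 := by
    apply Finset.prod_ne_zero_iff.mpr
    intro j _
    exact pow_ne_zero _ (Polynomial.X_sub_C_ne_zero _)
  have hPne : f k * ∏ j ∈ (Finset.range (m + 1)).erase k, f j ≠ 0 :=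
    mul_ne_zero (pow_ne_zero _ (Polynomial.X_sub_C_ne_zero _)) hQne
  rw [hsplit, Polynomial.rootMultiplicity_mul hPne]
  have h2 : (f k).rootMultiplicity (2 * (k : ℝ) - (m : ℝ)) = 2 := by
    rw [hf]
    exact Polynomial.rootMultiplicity_X_sub_C_pow _ 2
  have h0 : (∏ j ∈ (Finset.range (m + 1)).erase k, f j).rootMultiplicity
      (2 * (k : ℝ) - (m : ℝ)) = 0 := by
    apply Polynomial.rootMultiplicity_eq_zero
    intro hroot
    rw [Polynomial.IsRoot, Polynomial.eval_prod] at hroot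
    rw [Finset.prod_eq_zero_iff] at hroot
    obtain ⟨j, hjmem, hj0⟩ := hroot
    have hjk : j ≠ k := Finset.ne_of_mem_erase hjmem
    rw [hf] at hj0
    simp only [Polynomial.eval_pow, Polynomial.eval_sub, Polynomial.eval_X,
      Polynomial.eval_C] at hj0
    have : (2 * (k : ℝ) - (m : ℝ)) - (2 * (j : ℝ) - (m : ℝ)) ≠ 0 := by
      intro hc
      apply hjk
      have : (j : ℝ) = (k : ℝ) := by linarith
      exact_mod_cast this
    have hz : (2 * (k : ℝ) - (m : ℝ)) - (2 * (j : ℝ) - (m : ℝ)) = 0 := by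
      rw [pow_eq_zero_iff (by norm_num : (2 : ℕ) ≠ 0)] at hj0
      exact hj0
    exact this hz
  rw [h2, h0]
end

section
/- For n = 2m+1 odd, the matrix H_n(-n-1,-n-1) has the same eigenvalues as the Clement matrix C_n, namely -n, -n+2, ..., n-2, n. -/
open Polynomial Matrix



open Polynomial

noncomputable def gp (a b : ℕ) : Polynomial ℝ := (1 + X)^a * (1 - X)^b

lemma deriv_one_add_pow (a : ℕ) :
    derivative ((1+X:ℝ[X])^a) = C (a:ℝ) * (1+X)^(a-1) := by
  rw [derivative_pow]; simp [C_eq_natCast]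

lemma deriv_one_sub_pow (b : ℕ) :
    derivative ((1-X:ℝ[X])^b) = -(C (b:ℝ) * (1-X)^(b-1)) := by
  rw [derivative_pow]; simp [C_eq_natCast]

lemma gp_key (a b : ℕ) :
    (1 - X^2) * derivative (gp a b) + C ((a:ℝ)+b) * (X * gp a b)
      = C ((a:ℝ) - b) * gp a b := by
  unfold gp
  rw [derivative_mul, deriv_one_add_pow, deriv_one_sub_pow]
  rcases a with _|s <;> rcases b with _|t <;>
    simp only [Nat.add_sub_cancel, Nat.cast_zero, Nat.cast_succ, Nat.zero_sub, pow_zero,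
      map_zero, zero_mul, mul_zero, map_add, _root_.map_one, Nat.cast_add, Nat.cast_one] <;>
  · have e1 : (1 - X^2 : ℝ[X]) = (1+X) * (1-X) := by ring
    rw [e1]
    ring_nf
    simp only [map_add, map_sub, _root_.map_one, map_zero, map_neg, neg_neg, neg_sub]
    try ring

lemma gp_coeff_zero (a b : ℕ) : (gp a b).coeff 0 = 1 := by
  unfold gp
  rw [mul_coeff_zero, coeff_zero_eq_eval_zero, coeff_zero_eq_eval_zero]
  simp

lemma gp_natDegree_le (a b : ℕ) : (gp a b).natDegree ≤ a + b := by
  unfold gp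
  have h1 : (1 + X : ℝ[X]).natDegree = 1 := by
    rw [add_comm, ← C_1]; exact natDegree_X_add_C 1
  have h2 : (1 - X : ℝ[X]).natDegree = 1 := by
    rw [show (1 - X : ℝ[X]) = -(X - C 1) by rw [C_1]; ring, natDegree_neg]
    exact natDegree_X_sub_C 1
  refine le_trans (natDegree_mul_le) (add_le_add ?_ ?_) <;>
  refine le_trans (natDegree_pow_le) ?_
  · rw [h1]; omega
  · rw [h2]; omega

lemma gp_coeff_top (a b j : ℕ) (h : a + b < j) : (gp a b).coeff j = 0 :=
  coeff_eq_zero_of_natDegree_lt (lt_of_le_of_lt (gp_natDegree_le a b) h)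

lemma gp_e1 (a b : ℕ) : (1 - X^2 : ℝ[X]) * derivative (gp a b)
    = derivative (gp a b) - derivative (gp a b) * X^2 := by ring

lemma gp_L0 (a b : ℕ) : (gp a b).coeff 1 = ((a:ℝ) - b) * (gp a b).coeff 0 := by
  have h := congrArg (fun p => p.coeff 0) (gp_key a b)
  simp only [gp_e1, coeff_add, coeff_sub, coeff_C_mul, mul_coeff_zero, coeff_X_zero,
    coeff_mul_X_pow', coeff_derivative, zero_mul, mul_zero] at h
  norm_num at h
  linarith [h]

lemma gp_L1 (a b : ℕ) :
    2 * (gp a b).coeff 2 + ((a:ℝ) + b) * (gp a b).coeff 0 = ((a:ℝ) - b) * (gp a b).coeff 1 := by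
  have h := congrArg (fun p => p.coeff 1) (gp_key a b)
  have e2 : (X : ℝ[X]) * gp a b = gp a b * X := by ring
  simp only [gp_e1, e2, coeff_add, coeff_sub, coeff_C_mul, coeff_mul_X_pow',
    coeff_derivative, coeff_mul_X] at h
  norm_num at h
  linarith [h]

lemma gp_Lrec (a b j : ℕ) :
    ((j:ℝ)+3) * (gp a b).coeff (j+3) + (((a:ℝ) + b) - ((j:ℝ)+1)) * (gp a b).coeff (j+1)
      = ((a:ℝ) - b) * (gp a b).coeff (j+2) := by
  have h := congrArg (fun p => p.coeff (j+2)) (gp_key a b)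
  have e2 : (X : ℝ[X]) * gp a b = gp a b * X := by ring
  simp only [gp_e1, e2, coeff_add, coeff_sub, coeff_C_mul, coeff_mul_X_pow',
    coeff_derivative, coeff_mul_X, show j+2-2 = j from rfl, if_pos (by omega : 2 ≤ j+2)] at h
  push_cast at h
  linarith [h]

/-- unified recurrence -/
lemma gp_Lall (a b i : ℕ) :
    ((i:ℝ)+1) * (gp a b).coeff (i+1)
      + (((a:ℝ) + b) + 1 - i) * (if i = 0 then 0 else (gp a b).coeff (i-1))
      = ((a:ℝ) - b) * (gp a b).coeff i := by
  match i with
  | 0 => simpa using gp_L0 a b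
  | 1 =>
    simp only [if_neg one_ne_zero]
    norm_num
    linarith [gp_L1 a b]
  | (j+2) =>
    have h := gp_Lrec a b j
    simp only [if_neg (by omega : ¬ j+2 = 0), show j+2-1 = j+1 from rfl]
    push_cast
    push_cast at h
    linarith [h]


open Polynomial Matrix

lemma tri_mulVec {N : ℕ} (f g : ℕ → ℝ) (v : ℕ → ℝ) (M : Matrix (Fin (N+1)) (Fin (N+1)) ℝ)
    (hM : ∀ i j : Fin (N+1), M i j
      = (if (i:ℕ)+1 = (j:ℕ) then f i else 0) + (if (j:ℕ)+1 = (i:ℕ) then g j else 0))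
    (i : Fin (N+1)) :
    M.mulVec (fun j => v (j:ℕ)) i
      = (if (i:ℕ)+1 < N+1 then f i * v ((i:ℕ)+1) else 0)
        + (if (i:ℕ) ≠ 0 then g ((i:ℕ)-1) * v ((i:ℕ)-1) else 0) := by
  unfold Matrix.mulVec dotProduct
  have : ∀ j : Fin (N+1), M i j * v (j:ℕ)
      = (if (i:ℕ)+1 = (j:ℕ) then f i * v (j:ℕ) else 0)
        + (if (j:ℕ)+1 = (i:ℕ) then g (j:ℕ) * v (j:ℕ) else 0) := by
    intro j; rw [hM]; split_ifs <;> ring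
  rw [Finset.sum_congr rfl (fun j _ => this j), Finset.sum_add_distrib]
  congr 1
  · by_cases h : (i:ℕ)+1 < N+1
    · rw [if_pos h, Finset.sum_eq_single (⟨(i:ℕ)+1, h⟩ : Fin (N+1))]
      · simp
      · intro j _ hj
        rw [if_neg]
        intro hc
        exact hj (by apply Fin.ext; simpa using hc.symm)
      · simp
    · rw [if_neg h, Finset.sum_eq_zero]
      intro j _
      rw [if_neg]
      have := j.isLt
      omega
  · by_cases h : (i:ℕ) ≠ 0
    · rw [if_pos h, Finset.sum_eq_single (⟨(i:ℕ)-1, by omega⟩ : Fin (N+1))]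
      · rw [if_pos (by simp; omega)]
      · intro j _ hj
        rw [if_neg]
        intro hc
        exact hj (by apply Fin.ext; simpa using (by omega : (j:ℕ) = (i:ℕ)-1))
      · simp
    · rw [if_neg h, Finset.sum_eq_zero]
      intro j _
      rw [if_neg]
      omega

/-- The diagonal rescaling sending the Clement eigenvectors to `Hmat` eigenvectors. -/
noncomputable def dd (n : ℕ) : ℕ → ℝ
  | 0 => 1
  | (j+1) => (if j % 2 = 0 then ((j:ℝ)+1)/((j:ℝ) - n) else 1) * dd n j

lemma dd_ne (n : ℕ) (hn : n % 2 = 1) : ∀ j, dd n j ≠ 0 := by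
  intro j
  induction j with
  | zero => norm_num [dd]
  | succ j ih =>
    rw [dd]
    apply mul_ne_zero _ ih
    split_ifs with hj
    · apply div_ne_zero (by positivity)
      have : (j:ℕ) ≠ n := by omega
      intro hc
      exact this (by exact_mod_cast sub_eq_zero.mp hc)
    · norm_num

lemma dd_even (n j : ℕ) (hn : n % 2 = 1) (hj : j % 2 = 0) :
    ((j:ℝ) - n) * dd n (j+1) = ((j:ℝ)+1) * dd n j := by
  rw [dd, if_pos hj]
  have hne : (j:ℝ) - n ≠ 0 := by
    have : (j:ℕ) ≠ n := by omega
    intro hc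
    exact this (by exact_mod_cast sub_eq_zero.mp hc)
  field_simp

lemma dd_even' (n j : ℕ) (hn : n % 2 = 1) (hj : j % 2 = 0) :
    (-(j:ℝ)-1) * dd n j = ((n:ℝ) - j) * dd n (j+1) := by
  rw [dd, if_pos hj]
  have hne : (j:ℝ) - n ≠ 0 := by
    have : (j:ℕ) ≠ n := by omega
    intro hc
    exact this (by exact_mod_cast sub_eq_zero.mp hc)
  field_simp
  ring

lemma dd_odd (n j : ℕ) (hj : j % 2 = 1) : dd n (j+1) = dd n j := by
  rw [dd, if_neg (by omega), one_mul]



/-- superdiagonal entries of `Hmat n a a`. -/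
noncomputable def Bf (n : ℕ) (i : ℕ) : ℝ :=
  if (i + 1) % 2 = 0 then ((i:ℝ) + 1) else ((i:ℝ) + 1) + (-(n:ℝ) - 1)

/-- subdiagonal entries of `Hmat n a a`. -/
noncomputable def Sf (n : ℕ) (j : ℕ) : ℝ :=
  if (n - j) % 2 = 0 then ((n - j : ℕ) : ℝ) else ((n - j : ℕ) : ℝ) + (-(n:ℝ) - 1)

lemma clement_entry (n : ℕ) (i j : Fin (n+1)) :
    clement n i j = (if (i:ℕ)+1 = (j:ℕ) then ((i:ℕ):ℝ)+1 else 0)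
      + (if (j:ℕ)+1 = (i:ℕ) then (n:ℝ) - ((j:ℕ):ℝ) else 0) := by
  unfold clement
  simp only [Matrix.of_apply]
  by_cases h1 : (i:ℕ)+1 = (j:ℕ) <;> by_cases h2 : (j:ℕ)+1 = (i:ℕ) <;>
    simp [h1, h2] <;> omega

lemma Hmat_entry (n : ℕ) (i j : Fin (n+1)) :
    Hmat n (-(n:ℝ) - 1) (-(n:ℝ) - 1) i j
      = (if (i:ℕ)+1 = (j:ℕ) then Bf n (i:ℕ) else 0)
      + (if (j:ℕ)+1 = (i:ℕ) then Sf n (j:ℕ) else 0) := by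
  unfold Hmat Bf Sf
  simp only [Matrix.of_apply]
  by_cases h1 : (i:ℕ)+1 = (j:ℕ) <;> by_cases h2 : (j:ℕ)+1 = (i:ℕ) <;>
    simp [h1, h2] <;> omega

lemma crec (a b n : ℕ) (hab : a + b = n) (i0 : ℕ) (h1 : 1 ≤ i0) (h2 : i0 ≤ n) :
    ((i0:ℝ)+1) * (gp a b).coeff (i0+1)
      + ((n:ℝ) - ((i0-1:ℕ):ℝ)) * (gp a b).coeff (i0-1)
      = ((a:ℝ) - b) * (gp a b).coeff i0 := by
  have h := gp_Lall a b i0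
  rw [if_neg (by omega)] at h
  have hc : ((i0-1:ℕ):ℝ) = (i0:ℝ) - 1 := by
    rw [Nat.cast_sub h1]; norm_num
  have hn : ((a:ℝ)+b) = (n:ℝ) := by exact_mod_cast congrArg (Nat.cast : ℕ → ℝ) hab
  rw [hc]
  rw [hn] at h
  linarith [h]

lemma hB (n : ℕ) (hn : n % 2 = 1) (i : ℕ) :
    Bf n i * dd n (i+1) = ((i:ℝ)+1) * dd n i := by
  unfold Bf
  rcases Nat.even_or_odd i with hi | hi <;> [rw [Nat.even_iff] at hi; rw [Nat.odd_iff] at hi]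
  · rw [if_neg (by omega : ¬ (i+1) % 2 = 0)]
    have := dd_even n i hn (by omega)
    linarith [this]
  · rw [if_pos (by omega : (i+1) % 2 = 0), dd_odd n i (by omega)]

lemma hS (n : ℕ) (hn : n % 2 = 1) (j : ℕ) (hjn : j < n) :
    Sf n j * dd n j = ((n:ℝ) - (j:ℕ)) * dd n (j+1) := by
  unfold Sf
  have hcast : ((n - j : ℕ) : ℝ) = (n:ℝ) - j := by
    rw [Nat.cast_sub (le_of_lt hjn)]
  rcases Nat.even_or_odd j with hj | hj <;> [rw [Nat.even_iff] at hj; rw [Nat.odd_iff] at hj]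
  · rw [if_neg (by omega : ¬ (n - j) % 2 = 0), hcast]
    have := dd_even' n j hn (by omega)
    linarith [this]
  · rw [if_pos (by omega : (n - j) % 2 = 0), hcast, dd_odd n j (by omega)]

lemma clement_eigen (n : ℕ) (hn : n % 2 = 1) (k : Fin (n+1)) :
    (clement n).mulVec (fun i : Fin (n+1) => (gp (k:ℕ) (n - (k:ℕ))).coeff (i:ℕ))
      = (((k:ℕ):ℝ) - ((n - (k:ℕ) : ℕ):ℝ)) •
          fun i : Fin (n+1) => (gp (k:ℕ) (n - (k:ℕ))).coeff (i:ℕ) := by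
  have hab : (k:ℕ) + (n - (k:ℕ)) = n := by have := k.isLt; omega
  funext i
  rw [tri_mulVec (fun i => (i:ℝ)+1) (fun j => (n:ℝ) - j)
      (fun j => (gp (k:ℕ) (n - (k:ℕ))).coeff j) _ (clement_entry n) i]
  simp only [Pi.smul_apply, smul_eq_mul]
  by_cases h0 : (i:ℕ) = 0
  · rw [if_pos (by omega : (i:ℕ)+1 < n+1), if_neg (by simp [h0]), h0]
    have := gp_L0 (k:ℕ) (n - (k:ℕ))
    push_cast
    linarith [this]
  · have h1 : 1 ≤ (i:ℕ) := by omega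
    have hr := crec (k:ℕ) (n - (k:ℕ)) n hab (i:ℕ) h1 (by have := i.isLt; omega)
    by_cases hlt : (i:ℕ)+1 < n+1
    · rw [if_pos hlt, if_pos h0]
      linarith [hr]
    · rw [if_neg hlt, if_pos h0]
      have htop : (gp (k:ℕ) (n - (k:ℕ))).coeff ((i:ℕ)+1) = 0 := by
        apply gp_coeff_top
        have := i.isLt; omega
      rw [htop] at hr
      linarith [hr]

lemma Hmat_eigen (n : ℕ) (hn : n % 2 = 1) (k : Fin (n+1)) :
    (Hmat n (-(n:ℝ) - 1) (-(n:ℝ) - 1)).mulVec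
        (fun i : Fin (n+1) => dd n (i:ℕ) * (gp (k:ℕ) (n - (k:ℕ))).coeff (i:ℕ))
      = (((k:ℕ):ℝ) - ((n - (k:ℕ) : ℕ):ℝ)) •
          fun i : Fin (n+1) => dd n (i:ℕ) * (gp (k:ℕ) (n - (k:ℕ))).coeff (i:ℕ) := by
  have hab : (k:ℕ) + (n - (k:ℕ)) = n := by have := k.isLt; omega
  funext i
  rw [tri_mulVec (Bf n) (Sf n)
      (fun j => dd n j * (gp (k:ℕ) (n - (k:ℕ))).coeff j) _ (Hmat_entry n) i]
  simp only [Pi.smul_apply, smul_eq_mul]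
  by_cases h0 : (i:ℕ) = 0
  · rw [if_pos (by omega : (i:ℕ)+1 < n+1), if_neg (by simp [h0]), h0]
    have hb := hB n hn 0
    have hL := gp_L0 (k:ℕ) (n - (k:ℕ))
    push_cast at hb ⊢
    linear_combination (gp (k:ℕ) (n - (k:ℕ))).coeff 1 * hb + dd n 0 * hL
  · have h1 : 1 ≤ (i:ℕ) := by omega
    have hilt := i.isLt
    have hr := crec (k:ℕ) (n - (k:ℕ)) n hab (i:ℕ) h1 (by omega)
    have hs := hS n hn ((i:ℕ)-1) (by omega)
    rw [show (i:ℕ)-1+1 = (i:ℕ) by omega] at hs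
    by_cases hlt : (i:ℕ)+1 < n+1
    · rw [if_pos hlt, if_pos h0]
      have hb := hB n hn (i:ℕ)
      linear_combination (gp (k:ℕ) (n - (k:ℕ))).coeff ((i:ℕ)+1) * hb
        + (gp (k:ℕ) (n - (k:ℕ))).coeff ((i:ℕ)-1) * hs + dd n (i:ℕ) * hr
    · rw [if_neg hlt, if_pos h0]
      have htop : (gp (k:ℕ) (n - (k:ℕ))).coeff ((i:ℕ)+1) = 0 := by
        apply gp_coeff_top; omega
      rw [htop] at hr
      linear_combination (gp (k:ℕ) (n - (k:ℕ))).coeff ((i:ℕ)-1) * hs + dd n (i:ℕ) * hr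


open Polynomial Matrix Module.End

lemma spectrum_eq_of_eigenvectors {N : ℕ} (M : Matrix (Fin (N+1)) (Fin (N+1)) ℝ)
    (μ : Fin (N+1) → ℝ) (hinj : Function.Injective μ)
    (v : Fin (N+1) → Fin (N+1) → ℝ) (hv0 : ∀ k, v k ≠ 0)
    (hv : ∀ k, M.mulVec (v k) = μ k • v k) : spectrum ℝ M = Set.range μ := by
  have hspec : spectrum ℝ M = spectrum ℝ (Matrix.toLinAlgEquiv' M) :=
    (AlgEquiv.spectrum_eq Matrix.toLinAlgEquiv' M).symm
  have happly : ∀ x : Fin (N+1) → ℝ, Matrix.toLinAlgEquiv' M x = M.mulVec x := by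
    intro x; rfl
  have hev : ∀ k, Module.End.HasEigenvector (Matrix.toLinAlgEquiv' M) (μ k) (v k) := by
    intro k
    refine ⟨Module.End.mem_eigenspace_iff.mpr ?_, hv0 k⟩
    rw [happly, hv]
  rw [hspec]
  apply Set.eq_of_subset_of_subset
  · intro x hx
    by_contra hxr
    rw [← Module.End.hasEigenvalue_iff_mem_spectrum] at hx
    obtain ⟨w, hw⟩ := hx.exists_hasEigenvector
    have hinj' : Function.Injective (fun o : Option (Fin (N+1)) => o.elim x μ) := by
      intro o1 o2 h
      have hxr' : ∀ k, x ≠ μ k := by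
        intro k hk; exact hxr ⟨k, hk.symm⟩
      match o1, o2, h with
      | none, none, h => rfl
      | none, some k, h => exact absurd h (hxr' k)
      | some k, none, h => exact absurd h.symm (hxr' k)
      | some k, some l, h => exact congrArg some (hinj h)
    have hli := Module.End.eigenvectors_linearIndependent' (Matrix.toLinAlgEquiv' M)
      (fun o : Option (Fin (N+1)) => o.elim x μ) hinj'
      (fun o => o.elim w v) (by rintro (_|k); exacts [hw, hev k])
    have := hli.fintype_card_le_finrank
    simp [Module.finrank_pi] at this
  · rintro - ⟨k, rfl⟩
    exact (Module.End.hasEigenvalue_of_hasEigenvector (hev k)).mem_spectrum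

/-- for `n = 2m+1` odd, the matrix `H_n(-n-1,-n-1)` has the same
eigenvalues as the Clement matrix `C_n`, namely `-n, -n+2, ..., n-2, n`. -/
theorem Hmat_odd_special_spectrum (m : ℕ) :
    spectrum ℝ (Hmat (2 * m + 1) (-((2 * m + 1 : ℕ) : ℝ) - 1) (-((2 * m + 1 : ℕ) : ℝ) - 1))
        = spectrum ℝ (clement (2 * m + 1)) ∧
      spectrum ℝ (Hmat (2 * m + 1) (-((2 * m + 1 : ℕ) : ℝ) - 1) (-((2 * m + 1 : ℕ) : ℝ) - 1))
        = {x : ℝ | ∃ j : Fin (2 * m + 2), x = 2 * (j : ℕ) - ((2 * m + 1 : ℕ) : ℝ)} := by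
  have hnodd : (2*m+1) % 2 = 1 := by omega
  set μ : Fin (2*m+1+1) → ℝ :=
    fun k => ((k:ℕ):ℝ) - ((2*m+1 - (k:ℕ) : ℕ):ℝ) with hμdef
  have hμ : ∀ k : Fin (2*m+1+1), μ k = 2*((k:ℕ):ℝ) - ((2*m+1:ℕ):ℝ) := by
    intro k
    simp only [hμdef]
    rw [Nat.cast_sub (by have := k.isLt; omega)]
    push_cast
    ring
  have hinj : Function.Injective μ := by
    intro k l h
    rw [hμ, hμ] at h
    have : ((k:ℕ):ℝ) = ((l:ℕ):ℝ) := by linarith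
    exact Fin.ext (by exact_mod_cast this)
  have hC : spectrum ℝ (clement (2*m+1)) = Set.range μ := by
    apply spectrum_eq_of_eigenvectors _ μ hinj
      (fun k => fun i : Fin (2*m+1+1) => (gp (k:ℕ) (2*m+1 - (k:ℕ))).coeff (i:ℕ))
    · intro k h
      have := congrFun h (⟨0, by omega⟩ : Fin (2*m+1+1))
      rw [gp_coeff_zero] at this
      simpa using this
    · intro k
      exact clement_eigen (2*m+1) hnodd k
  have hH : spectrum ℝ (Hmat (2*m+1) (-((2 * m + 1 : ℕ) : ℝ) - 1) (-((2 * m + 1 : ℕ) : ℝ) - 1))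
      = Set.range μ := by
    apply spectrum_eq_of_eigenvectors _ μ hinj
      (fun k => fun i : Fin (2*m+1+1) => dd (2*m+1) (i:ℕ) * (gp (k:ℕ) (2*m+1 - (k:ℕ))).coeff (i:ℕ))
    · intro k h
      have := congrFun h (⟨0, by omega⟩ : Fin (2*m+1+1))
      rw [gp_coeff_zero] at this
      simp only [dd] at this
      simpa using this
    · intro k
      exact Hmat_eigen (2*m+1) hnodd k
  refine ⟨hC ▸ hH, hH.trans ?_⟩
  ext x
  constructor
  · rintro ⟨k, rfl⟩
    exact ⟨k, hμ k⟩
  · rintro ⟨j, hj⟩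
    exact ⟨j, (hμ j).trans hj.symm⟩
end

section
/- For n = 2m+1 odd, the eigenvalues of the matrix (1/2)·H_n(1,1) are exactly the integers ±1, ±2, ..., ±(m+1). -/
namespace HmatAux

/-- halved superdiagonal entry below/right of row `i` (0-based). -/
noncomputable def sf (i : ℕ) : ℝ :=
  (if (i + 1) % 2 = 0 then ((i : ℕ) : ℝ) + 1 else (((i : ℕ) : ℝ) + 1) + 1) / 2

/-- halved subdiagonal entry in column `k` (0-based). -/
noncomputable def tf (m k : ℕ) : ℝ :=
  (if (2 * m + 1 - k) % 2 = 0 then ((2 * m + 1 - k : ℕ) : ℝ)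
   else ((2 * m + 1 - k : ℕ) : ℝ) + 1) / 2

/-- entry function of `x • 1 - (1/2) • Hmat (2m+1) 1 1` on ℕ indices. -/
noncomputable def Bent (m : ℕ) (x : ℝ) (i k : ℕ) : ℝ :=
  if i = k then x else if i + 1 = k then -sf i else if k + 1 = i then -tf m k else 0

noncomputable def Mmat (m : ℕ) (x : ℝ) (j : ℕ) : Matrix (Fin j) (Fin j) ℝ :=
  Matrix.of fun i k => Bent m x i k

noncomputable def D (m : ℕ) (x : ℝ) (j : ℕ) : ℝ := (Mmat m x j).det

noncomputable def g (m j : ℕ) : ℝ := sf j * tf m j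

lemma sav {n : ℕ} (p : Fin (n + 1)) (q : Fin n) :
    ((p.succAbove q : Fin (n + 1)) : ℕ) = if (q : ℕ) < (p : ℕ) then (q : ℕ) else (q : ℕ) + 1 := by
  rw [Fin.succAbove]
  by_cases h : (q : ℕ) < (p : ℕ) <;> simp [Fin.lt_def, h]


lemma Bent_diag (m : ℕ) (x : ℝ) (i : ℕ) : Bent m x i i = x := by
  rw [Bent, if_pos rfl]

lemma Bent_super (m : ℕ) (x : ℝ) (i : ℕ) : Bent m x i (i + 1) = -sf i := by
  rw [Bent, if_neg (by omega), if_pos rfl]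

lemma Bent_sub (m : ℕ) (x : ℝ) (k : ℕ) : Bent m x (k + 1) k = -tf m k := by
  rw [Bent, if_neg (by omega), if_neg (by omega), if_pos rfl]

lemma Bent_far (m : ℕ) (x : ℝ) {i k : ℕ} (h1 : i ≠ k) (h2 : i + 1 ≠ k) (h3 : k + 1 ≠ i) :
    Bent m x i k = 0 := by
  rw [Bent, if_neg h1, if_neg h2, if_neg h3]

lemma Mmat_sub (m : ℕ) (x : ℝ) (n : ℕ) :
    (Mmat m x (n + 1)).submatrix Fin.castSucc Fin.castSucc = Mmat m x n := by
  ext p q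
  simp [Mmat]

lemma detrec (m : ℕ) (x : ℝ) (j : ℕ) :
    D m x (j + 2) = x * D m x (j + 1) - g m j * D m x j := by
  classical
  set cA : Fin (j + 2) := ⟨j, by omega⟩ with hcA
  set cB : Fin (j + 2) := Fin.last (j + 1) with hcB
  have hne : cA ≠ cB := Fin.ne_of_val_ne (by simp only [hcA, hcB, Fin.val_last]; omega)
  set f : Fin (j + 2) → ℝ := fun c =>
    (-1 : ℝ) ^ ((Fin.last (j + 1) : ℕ) + (c : ℕ)) * (Mmat m x (j + 2)) (Fin.last (j + 1)) c *
      ((Mmat m x (j + 2)).submatrix (Fin.last (j + 1)).succAbove c.succAbove).det with hf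
  have hexp : D m x (j + 2) = ∑ c : Fin (j + 2), f c := by
    rw [D, Matrix.det_succ_row (Mmat m x (j + 2)) (Fin.last (j + 1))]
  have hzero : ∀ c ∈ (Finset.univ : Finset (Fin (j + 2))),
      c ∉ ({cA, cB} : Finset (Fin (j + 2))) → f c = 0 := by
    intro c _ hc
    simp only [Finset.mem_insert, Finset.mem_singleton, not_or] at hc
    have h1 : (c : ℕ) ≠ j := fun h => hc.1 (Fin.ext h)
    have h2 : (c : ℕ) ≠ j + 1 := fun h => hc.2 (Fin.ext h)
    have hent : (Mmat m x (j + 2)) (Fin.last (j + 1)) c = 0 := by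
      have hcv : (c : ℕ) < j + 2 := c.isLt
      have hRv : ((Fin.last (j + 1) : Fin (j + 2)) : ℕ) = j + 1 := rfl
      have hBv : ((cB : Fin (j + 2)) : ℕ) = j + 1 := rfl
      have hAv : ((cA : Fin (j + 2)) : ℕ) = j := rfl
      exact Bent_far m x (by omega) (by omega) (by omega)
    simp only [hf, hent, mul_zero, zero_mul]
  have hsum : D m x (j + 2) = f cA + f cB := by
    rw [hexp, ← Finset.sum_subset (Finset.subset_univ {cA, cB}) hzero,
      Finset.sum_pair hne]
  -- the cB term
  have hcBterm : f cB = x * D m x (j + 1) := by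
    simp only [hf]
    have hsign : (-1 : ℝ) ^ ((Fin.last (j + 1) : ℕ) + ((cB : Fin (j+2)) : ℕ)) = 1 := by
      rw [show ((Fin.last (j + 1) : ℕ) + ((cB : Fin (j+2)) : ℕ)) = (j + 1) + (j + 1) from rfl]
      exact Even.neg_one_pow ⟨j + 1, rfl⟩
    have hent : (Mmat m x (j + 2)) (Fin.last (j + 1)) cB = x := Bent_diag m x (j + 1)
    have hmin : ((Mmat m x (j + 2)).submatrix (Fin.last (j + 1)).succAbove
        (cB : Fin (j+2)).succAbove).det = D m x (j + 1) := by
      rw [hcB, Fin.succAbove_last, Mmat_sub, D]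
    rw [hsign, hent, hmin]; ring
  -- the cA term
  have hcAterm : f cA = -(g m j * D m x j) := by
    simp only [hf]
    have hsign : (-1 : ℝ) ^ ((Fin.last (j + 1) : ℕ) + ((cA : Fin (j+2)) : ℕ)) = -1 := by
      rw [show ((Fin.last (j + 1) : ℕ) + ((cA : Fin (j+2)) : ℕ)) = (j + 1) + j from rfl]
      exact Odd.neg_one_pow ⟨j, by ring⟩
    have hent : (Mmat m x (j + 2)) (Fin.last (j + 1)) cA = -tf m j := Bent_sub m x j
    set N : Matrix (Fin (j + 1)) (Fin (j + 1)) ℝ :=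
      (Mmat m x (j + 2)).submatrix (Fin.last (j + 1)).succAbove
        (cA : Fin (j+2)).succAbove with hN
    have hNlastcol : ∀ p : Fin (j + 1), N p (Fin.last j) = Bent m x (p : ℕ) (j + 1) := by
      intro p
      have e2 : (((cA : Fin (j+2)).succAbove (Fin.last j)) : ℕ) = j + 1 := by
        rw [sav]; simp [hcA]
      show Bent m x (((Fin.last (j+1)).succAbove p : Fin (j+2)) : ℕ)
          (((cA : Fin (j+2)).succAbove (Fin.last j) : Fin (j+2)) : ℕ) = _
      rw [e2, Fin.succAbove_last]
      rfl
    have hNdet : N.det = -sf j * D m x j := by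
      rw [Matrix.det_succ_column N (Fin.last j)]
      rw [Finset.sum_eq_single (Fin.last j)]
      · have hsign2 : (-1 : ℝ) ^ (((Fin.last j : Fin (j+1)) : ℕ) + ((Fin.last j : Fin (j+1)) : ℕ)) = 1 :=
          Even.neg_one_pow ⟨((Fin.last j : Fin (j+1)) : ℕ), rfl⟩
        have hent2 : N (Fin.last j) (Fin.last j) = -sf j := by
          rw [hNlastcol]
          exact Bent_super m x j
        have hmin2 : (N.submatrix (Fin.last j).succAbove (Fin.last j).succAbove).det
            = D m x j := by
          rw [Fin.succAbove_last, hN, Matrix.submatrix_submatrix]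
          have hsub : (Mmat m x (j + 2)).submatrix
              ((Fin.last (j + 1)).succAbove ∘ Fin.castSucc)
              ((cA : Fin (j+2)).succAbove ∘ Fin.castSucc) = Mmat m x j := by
            ext p q
            have e2 : (((cA : Fin (j+2)).succAbove (Fin.castSucc q)) : ℕ) = (q : ℕ) := by
              rw [sav]; simp [hcA, q.isLt]
            show Bent m x (((Fin.last (j+1)).succAbove (Fin.castSucc p) : Fin (j+2)) : ℕ)
                (((cA : Fin (j+2)).succAbove (Fin.castSucc q) : Fin (j+2)) : ℕ)
                = Bent m x (p : ℕ) (q : ℕ)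
            rw [e2, Fin.succAbove_last]
            rfl
          rw [hsub, D]
        rw [hsign2, hent2, hmin2]; ring
      · intro p _ hp
        have hpv : (p : ℕ) < j := by
          have h1 := p.isLt
          have h2 : (p : ℕ) ≠ j := fun h => hp (Fin.ext (by simpa using h))
          omega
        have hent0 : N p (Fin.last j) = 0 := by
          rw [hNlastcol]
          exact Bent_far m x (by omega) (by omega) (by omega)
        rw [hent0]; ring
      · intro h
        exact absurd (Finset.mem_univ _) h
    rw [hsign, hent, hNdet, g]; ring
  rw [hsum, hcAterm, hcBterm]; ring

lemma g_even (m r : ℕ) (h : r ≤ m) :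
    g m (2 * r) = ((r : ℝ) + 1) * ((m : ℝ) + 1 - r) := by
  rw [g, sf, tf]
  rw [if_neg (by omega), if_neg (by omega)]
  have e : 2 * m + 1 - 2 * r = 2 * (m - r) + 1 := by omega
  rw [e]
  have : ((2 * (m - r) + 1 : ℕ) : ℝ) = 2 * ((m : ℝ) - r) + 1 := by
    push_cast [Nat.cast_sub h]; ring
  rw [this]; push_cast; ring

lemma g_odd (m r : ℕ) (h : r ≤ m) :
    g m (2 * r + 1) = ((r : ℝ) + 1) * ((m : ℝ) - r) := by
  rw [g, sf, tf]
  rw [if_pos (by omega), if_pos (by omega)]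
  have e : 2 * m + 1 - (2 * r + 1) = 2 * (m - r) := by omega
  rw [e]
  have : ((2 * (m - r) : ℕ) : ℝ) = 2 * ((m : ℝ) - r) := by
    push_cast [Nat.cast_sub h]; ring
  rw [this]; push_cast; ring

/-- coefficients of the expansion of the even-indexed minors. -/
noncomputable def aa (m r j : ℕ) : ℝ :=
  (-1) ^ (r - j) * (r.choose j : ℝ) * (∏ i ∈ Finset.Ico j r, ((i : ℝ) + 1)) *
    (∏ i ∈ Finset.Ico j r, ((m : ℝ) - i))

noncomputable def phi (x : ℝ) (j : ℕ) : ℝ :=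
  ∏ k ∈ Finset.range j, (x ^ 2 - ((k : ℝ) + 1) ^ 2)

noncomputable def E (m : ℕ) (x : ℝ) (r : ℕ) : ℝ :=
  ∑ j ∈ Finset.range (r + 1), aa m r j * phi x j

lemma aa_zero (m : ℕ) {r j : ℕ} (h : r < j) : aa m r j = 0 := by
  simp [aa, Nat.choose_eq_zero_of_lt h]

lemma aa_self (m r : ℕ) : aa m r r = 1 := by
  simp [aa]

lemma phi_succ (x : ℝ) (j : ℕ) :
    phi x (j + 1) = (x ^ 2 - ((j : ℝ) + 1) ^ 2) * phi x j := by
  rw [phi, phi, Finset.prod_range_succ]; ring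

lemma L1 (m r j : ℕ) (hj : j ≤ r + 1) :
    ((r : ℝ) + 1 - j) * aa m (r + 1) j
      = -(((r : ℝ) + 1) ^ 2 * ((m : ℝ) - r)) * aa m r j := by
  rcases Nat.lt_or_ge r j with hgt | hle
  · have hj' : j = r + 1 := by omega
    subst hj'
    rw [aa_zero m (show r < r + 1 by omega)]
    push_cast
    ring
  · have hch : ((r + 1).choose j : ℝ) * ((r : ℝ) + 1 - j) = (r.choose j : ℝ) * ((r : ℝ) + 1) := by
      have h0 := Nat.choose_mul_succ_eq r j
      have h1 : ((r.choose j * (r + 1) : ℕ) : ℝ) = ((r + 1).choose j * (r + 1 - j) : ℕ) := by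
        exact_mod_cast congrArg (Nat.cast : ℕ → ℝ) h0
      push_cast [Nat.cast_sub hj] at h1
      linarith [h1]
    rw [aa, aa, Finset.prod_Ico_succ_top hle, Finset.prod_Ico_succ_top hle,
      show r + 1 - j = (r - j) + 1 by omega, pow_succ]
    set P1 : ℝ := ∏ i ∈ Finset.Ico j r, ((i : ℝ) + 1) with hP1
    set P2 : ℝ := ∏ i ∈ Finset.Ico j r, ((m : ℝ) - i) with hP2
    push_cast
    linear_combination ((-1 : ℝ) ^ (r - j) * (-1) * P1 * P2 * ((m : ℝ) - r) * ((r : ℝ) + 1)) * hch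

lemma L2 (m r j : ℕ) (hj1 : 1 ≤ j) (hj : j ≤ r + 1) :
    ((r : ℝ) - j + 1) * aa m r (j - 1)
      = -((j : ℝ) ^ 2 * ((m : ℝ) - j + 1)) * aa m r j := by
  obtain ⟨i, rfl⟩ : ∃ i, j = i + 1 := ⟨j - 1, by omega⟩
  simp only [Nat.add_sub_cancel]
  rcases Nat.lt_or_ge r (i + 1) with hgt | hle
  · have : i = r := by omega
    subst this
    rw [aa_zero m (Nat.lt_succ_self _), aa_self]
    push_cast; ring
  · have hch : (r.choose i : ℝ) * ((r : ℝ) - i) = (r.choose (i + 1) : ℝ) * ((i : ℝ) + 1) := by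
      have h0 := Nat.choose_succ_right_eq r i
      have h1 : ((r.choose (i + 1) * (i + 1) : ℕ) : ℝ) = ((r.choose i * (r - i) : ℕ) : ℝ) := by
        exact_mod_cast congrArg (Nat.cast : ℕ → ℝ) h0
      push_cast [Nat.cast_sub (by omega : i ≤ r)] at h1
      linarith [h1]
    have hlt : i < r := by omega
    rw [aa, aa,
      Finset.prod_eq_prod_Ico_succ_bot hlt, Finset.prod_eq_prod_Ico_succ_bot hlt,
      show r - i = (r - (i + 1)) + 1 by omega, pow_succ]
    set P1 : ℝ := ∏ i' ∈ Finset.Ico (i + 1) r, ((i' : ℝ) + 1) with hP1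
    set P2 : ℝ := ∏ i' ∈ Finset.Ico (i + 1) r, ((m : ℝ) - i') with hP2
    push_cast
    linear_combination ((-1 : ℝ) ^ (r - (i + 1)) * (-1) * P1 * P2 * ((i : ℝ) + 1) * ((m : ℝ) - i)) * hch

lemma L3 (m r j : ℕ) (hr : 1 ≤ r) :
    (r : ℝ) ^ 2 * ((m : ℝ) - r + 1) * aa m (r - 1) j
      = -((r : ℝ) - j) * aa m r j := by
  obtain ⟨s, rfl⟩ : ∃ s, r = s + 1 := ⟨r - 1, by omega⟩
  simp only [Nat.add_sub_cancel]
  rcases Nat.lt_or_ge s j with hgt | hle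
  · rcases Nat.lt_or_ge (s + 1) j with hgt2 | hle2
    · rw [aa_zero m hgt, aa_zero m hgt2]; ring
    · have : j = s + 1 := by omega
      subst this
      rw [aa_zero m hgt]
      push_cast; ring
  · have hch : ((s + 1).choose j : ℝ) * ((s : ℝ) + 1 - j) = (s.choose j : ℝ) * ((s : ℝ) + 1) := by
      have h0 := Nat.choose_mul_succ_eq s j
      have h1 : ((s.choose j * (s + 1) : ℕ) : ℝ) = ((s + 1).choose j * (s + 1 - j) : ℕ) := by
        exact_mod_cast congrArg (Nat.cast : ℕ → ℝ) h0
      push_cast [Nat.cast_sub (by omega : j ≤ s + 1)] at h1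
      linarith [h1]
    rw [aa, aa, Finset.prod_Ico_succ_top hle,
      Finset.prod_Ico_succ_top hle, show s + 1 - j = (s - j) + 1 by omega, pow_succ]
    set P1 : ℝ := ∏ i ∈ Finset.Ico j s, ((i : ℝ) + 1) with hP1
    set P2 : ℝ := ∏ i ∈ Finset.Ico j s, ((m : ℝ) - i) with hP2
    push_cast
    linear_combination ((-1 : ℝ) ^ (s - j) * (-1) * P1 * P2 * ((m : ℝ) - s) * ((s : ℝ) + 1)) * hch

lemma KI (m r j : ℕ) (hr : 1 ≤ r) (hrm : r ≤ m) (hj : j ≤ r + 1) :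
    aa m (r + 1) j = (if j = 0 then (0:ℝ) else aa m r (j - 1))
      + (((j : ℝ) + 1) ^ 2 - (2 * (r : ℝ) + 1) * ((m : ℝ) + 1 - r)) * aa m r j
      - (r : ℝ) ^ 2 * ((m : ℝ) + 1 - r) * ((m : ℝ) + 2 - r) * aa m (r - 1) j := by
  rcases Nat.lt_or_ge r j with hgt | hle
  · have hj' : j = r + 1 := by omega
    subst hj'
    rw [if_neg (by omega), aa_self, aa_zero m (Nat.lt_succ_self _),
      aa_zero m (show r - 1 < r + 1 by omega), show r + 1 - 1 = r from rfl, aa_self]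
    ring
  · have c1 : (0:ℝ) < (r : ℝ) + 1 - j := by
      have : (j : ℝ) ≤ (r : ℝ) := Nat.cast_le.mpr hle
      linarith
    have c2 : (0:ℝ) < (r : ℝ) := by exact_mod_cast hr
    have c3 : (0:ℝ) < (m : ℝ) - r + 1 := by
      have : (r : ℝ) ≤ (m : ℝ) := Nat.cast_le.mpr hrm
      linarith
    have hF : ((r : ℝ) + 1 - j) * ((r : ℝ) ^ 2 * ((m : ℝ) - r + 1)) ≠ 0 :=
      ne_of_gt (mul_pos c1 (mul_pos (pow_pos c2 2) c3))
    refine mul_left_cancel₀ hF ?_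
    have h1 := L1 m r j hj
    have h3 := L3 m r j hr
    by_cases hj0 : j = 0
    · subst hj0
      rw [if_pos rfl]
      push_cast at h1 h3 ⊢
      linear_combination ((r : ℝ) ^ 2 * ((m : ℝ) - r + 1)) * h1
        + (((r : ℝ) + 1) * ((r : ℝ) ^ 2 * ((m : ℝ) + 1 - r) * ((m : ℝ) + 2 - r))) * h3
    · rw [if_neg hj0]
      have h2 := L2 m r j (by omega) hj
      push_cast at h1 h2 h3 ⊢
      linear_combination ((r : ℝ) ^ 2 * ((m : ℝ) - r + 1)) * h1
        + (-(r : ℝ) ^ 2 * ((m : ℝ) - r + 1)) * h2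
        + ((((r : ℝ) + 1 - j)) * ((r : ℝ) ^ 2 * ((m : ℝ) + 1 - r) * ((m : ℝ) + 2 - r))) * h3

lemma E_rec (m : ℕ) (x : ℝ) (r : ℕ) (hr : 1 ≤ r) (hrm : r ≤ m) :
    E m x (r + 1)
      = (x ^ 2 - (2 * (r : ℝ) + 1) * ((m : ℝ) + 1 - r)) * E m x r
        - (r : ℝ) ^ 2 * ((m : ℝ) + 1 - r) * ((m : ℝ) + 2 - r) * E m x (r - 1) := by
  have hsplit : E m x (r + 1)
      = (∑ j ∈ Finset.range (r + 2), (if j = 0 then (0:ℝ) else aa m r (j - 1)) * phi x j)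
        + (∑ j ∈ Finset.range (r + 2),
            ((((j : ℝ) + 1) ^ 2 - (2 * (r : ℝ) + 1) * ((m : ℝ) + 1 - r)) * aa m r j) * phi x j)
        - (∑ j ∈ Finset.range (r + 2),
            ((r : ℝ) ^ 2 * ((m : ℝ) + 1 - r) * ((m : ℝ) + 2 - r) * aa m (r - 1) j) * phi x j) := by
    rw [E, ← Finset.sum_add_distrib, ← Finset.sum_sub_distrib]
    refine Finset.sum_congr rfl fun j hj => ?_
    have hj' : j ≤ r + 1 := by
      have := Finset.mem_range.mp hj; omega
    rw [KI m r j hr hrm hj']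
    ring
  have hS1 : (∑ j ∈ Finset.range (r + 2), (if j = 0 then (0:ℝ) else aa m r (j - 1)) * phi x j)
      = ∑ j ∈ Finset.range (r + 1), aa m r j * ((x ^ 2 - ((j : ℝ) + 1) ^ 2) * phi x j) := by
    rw [Finset.sum_range_succ'
      (fun j => (if j = 0 then (0:ℝ) else aa m r (j - 1)) * phi x j) (r + 1)]
    norm_num
    refine Finset.sum_congr rfl fun j _ => ?_
    rw [phi_succ]
  have hS2 : (∑ j ∈ Finset.range (r + 2),
        ((((j : ℝ) + 1) ^ 2 - (2 * (r : ℝ) + 1) * ((m : ℝ) + 1 - r)) * aa m r j) * phi x j)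
      = ∑ j ∈ Finset.range (r + 1),
          ((((j : ℝ) + 1) ^ 2 - (2 * (r : ℝ) + 1) * ((m : ℝ) + 1 - r)) * aa m r j) * phi x j := by
    rw [Finset.sum_range_succ, aa_zero m (Nat.lt_succ_self r)]
    ring
  have hS3 : (∑ j ∈ Finset.range (r + 2),
        ((r : ℝ) ^ 2 * ((m : ℝ) + 1 - r) * ((m : ℝ) + 2 - r) * aa m (r - 1) j) * phi x j)
      = ∑ j ∈ Finset.range r,
          ((r : ℝ) ^ 2 * ((m : ℝ) + 1 - r) * ((m : ℝ) + 2 - r) * aa m (r - 1) j) * phi x j := by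
    rw [Finset.sum_range_succ, Finset.sum_range_succ,
      aa_zero m (show r - 1 < r by omega), aa_zero m (show r - 1 < r + 1 by omega)]
    ring
  rw [hsplit, hS1, hS2, hS3, E, E, show r - 1 + 1 = r by omega,
    Finset.mul_sum, Finset.mul_sum, ← Finset.sum_add_distrib]
  have : (∑ j ∈ Finset.range (r + 1),
      (aa m r j * ((x ^ 2 - ((j : ℝ) + 1) ^ 2) * phi x j)
        + ((((j : ℝ) + 1) ^ 2 - (2 * (r : ℝ) + 1) * ((m : ℝ) + 1 - r)) * aa m r j) * phi x j))
      = ∑ j ∈ Finset.range (r + 1),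
          (x ^ 2 - (2 * (r : ℝ) + 1) * ((m : ℝ) + 1 - r)) * (aa m r j * phi x j) := by
    refine Finset.sum_congr rfl fun j _ => ?_
    ring
  rw [this]
  congr 1
  exact Finset.sum_congr rfl fun j _ => by ring

lemma D_zero (m : ℕ) (x : ℝ) : D m x 0 = 1 := Matrix.det_fin_zero

lemma D_one (m : ℕ) (x : ℝ) : D m x 1 = x := by
  rw [D, Matrix.det_fin_one]
  exact Bent_diag m x 0

lemma E_zero (m : ℕ) (x : ℝ) : E m x 0 = 1 := by
  simp [E, aa, phi]

lemma E_one (m : ℕ) (x : ℝ) : E m x 1 = x ^ 2 - ((m : ℝ) + 1) := by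
  rw [E, Finset.sum_range_succ, Finset.sum_range_succ, Finset.sum_range_zero]
  rw [aa, aa, phi, phi]
  have h1 : Finset.Ico 0 1 = {0} := rfl
  have h2 : Finset.Ico 1 1 = (∅ : Finset ℕ) := Finset.Ico_self 1
  rw [h1, h2]
  simp
  ring

lemma D_two (m : ℕ) (x : ℝ) : D m x 2 = E m x 1 := by
  have t := detrec m x 0
  rw [D_zero, D_one] at t
  have hg : g m 0 = (m : ℝ) + 1 := by
    have := g_even m 0 (Nat.zero_le m)
    simpa using this
  rw [E_one]
  rw [show (2:ℕ) = 0 + 2 from rfl, t, hg]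
  ring

lemma D_eq_E_pair (m : ℕ) (x : ℝ) :
    ∀ r, r ≤ m → D m x (2 * r) = E m x r ∧ D m x (2 * r + 2) = E m x (r + 1) := by
  intro r
  induction r with
  | zero =>
    intro _
    refine ⟨?_, ?_⟩
    · simpa [E_zero] using D_zero m x
    · simpa using D_two m x
  | succ s ih =>
    intro hs
    obtain ⟨hA, hB⟩ := ih (by omega)
    refine ⟨by rw [show 2 * (s + 1) = 2 * s + 2 by ring]; exact hB, ?_⟩
    -- two-step determinant recursion
    have t1 := detrec m x (2 * s + 2)
    have t2 := detrec m x (2 * s + 1)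
    have t3 := detrec m x (2 * s)
    have e2 : 2 * s + 2 + 1 = 2 * s + 1 + 2 := by omega
    rw [← e2] at t2
    rw [show 2 * s + 1 + 1 = 2 * s + 2 from rfl] at t2
    have hgA : g m (2 * s + 2) = ((s : ℝ) + 2) * ((m : ℝ) - s) := by
      have h := g_even m (s + 1) (by omega)
      rw [show 2 * (s + 1) = 2 * s + 2 by ring] at h
      rw [h]; push_cast; ring
    have hgB : g m (2 * s + 1) = ((s : ℝ) + 1) * ((m : ℝ) - s) := by
      have h := g_odd m s (by omega)
      rw [h]
    have hgC : g m (2 * s) = ((s : ℝ) + 1) * ((m : ℝ) + 1 - s) := by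
      have h := g_even m s (by omega)
      rw [h]
    have hrec := E_rec m x (s + 1) (by omega) (by omega)
    rw [show s + 1 - 1 = s from rfl] at hrec
    rw [show 2 * (s + 1) = 2 * s + 2 by ring]
    rw [hrec, ← hA, ← hB, show 2 * s + 2 = 2 * s + 2 from rfl]
    rw [hgA] at t1
    rw [hgB] at t2
    rw [hgC] at t3
    push_cast at hrec ⊢
    linear_combination t1 + x * t2 + (((s : ℝ) + 1) * ((m : ℝ) - s)) * t3

lemma E_top (m : ℕ) (x : ℝ) : E m x (m + 1) = phi x (m + 1) := by
  rw [E, Finset.sum_range_succ, aa_self, one_mul]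
  have hz : ∀ j ∈ Finset.range (m + 1), aa m (m + 1) j * phi x j = 0 := by
    intro j hj
    have hjm : j ≤ m := by
      have := Finset.mem_range.mp hj; omega
    have : (∏ i ∈ Finset.Ico j (m + 1), ((m : ℝ) - i)) = 0 := by
      refine Finset.prod_eq_zero (i := m) ?_ (by simp)
      simp [Finset.mem_Ico]; omega
    rw [aa, this]
    ring
  rw [Finset.sum_eq_zero hz, zero_add]

lemma D_top (m : ℕ) (x : ℝ) : D m x (2 * m + 2) = phi x (m + 1) := by
  have h := (D_eq_E_pair m x m le_rfl).2
  rw [h, E_top]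

lemma matid (m : ℕ) (x : ℝ) :
    x • (1 : Matrix (Fin (2 * m + 1 + 1)) (Fin (2 * m + 1 + 1)) ℝ)
        - (1 / 2 : ℝ) • Hmat (2 * m + 1) 1 1
      = Mmat m x (2 * m + 1 + 1) := by
  ext i k
  simp only [Matrix.sub_apply, Matrix.smul_apply, Matrix.one_apply, Hmat, Matrix.of_apply,
    Mmat, smul_eq_mul]
  by_cases h1 : (i : ℕ) = (k : ℕ)
  · have hik : i = k := Fin.ext h1
    subst hik
    rw [if_pos rfl, if_neg (by omega), if_neg (by omega), Bent, if_pos rfl]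
    ring
  · rw [if_neg (fun h => h1 (congrArg Fin.val h))]
    by_cases h2 : (i : ℕ) + 1 = (k : ℕ)
    · rw [if_pos h2, Bent, if_neg h1, if_pos h2, sf]
      split_ifs <;> ring
    · rw [if_neg h2]
      by_cases h3 : (k : ℕ) + 1 = (i : ℕ)
      · rw [if_pos h3, Bent, if_neg h1, if_neg h2, if_pos h3, tf]
        split_ifs <;> ring
      · rw [if_neg h3, Bent, if_neg h1, if_neg h2, if_neg h3]
        ring

end HmatAux

/-- for `n = 2m+1` odd, the eigenvalues of `(1/2)·H_n(1,1)` are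
exactly `±1, ±2, ..., ±(m+1)`. -/
theorem half_Hmat_odd_one_one_spectrum (m : ℕ) :
    spectrum ℝ ((1 / 2 : ℝ) • Hmat (2 * m + 1) 1 1)
      = {x : ℝ | ∃ k ∈ Finset.range (m + 1),
          x = (k : ℝ) + 1 ∨ x = -((k : ℝ) + 1)} := by
  ext x
  simp only [Set.mem_setOf_eq]
  rw [spectrum.mem_iff, Matrix.isUnit_iff_isUnit_det, isUnit_iff_ne_zero, not_ne_iff]
  have hdet : (algebraMap ℝ (Matrix (Fin (2 * m + 1 + 1)) (Fin (2 * m + 1 + 1)) ℝ) x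
        - (1 / 2 : ℝ) • Hmat (2 * m + 1) 1 1).det
      = ∏ k ∈ Finset.range (m + 1), (x ^ 2 - ((k : ℝ) + 1) ^ 2) := by
    rw [Algebra.algebraMap_eq_smul_one, HmatAux.matid m x]
    exact HmatAux.D_top m x
  rw [hdet, Finset.prod_eq_zero_iff]
  constructor
  · rintro ⟨k, hk, hx⟩
    refine ⟨k, hk, ?_⟩
    have hsplit : (x - ((k : ℝ) + 1)) * (x + ((k : ℝ) + 1)) = 0 := by linear_combination hx
    rcases mul_eq_zero.mp hsplit with h | h
    · left; linarith
    · right; linarith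
  · rintro ⟨k, hk, hx | hx⟩ <;> exact ⟨k, hk, by rw [hx]; ring⟩
end
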